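/- arXiv:1601.06572 — 3 statements merged into one kernel-verified Lean document; each statement's English description precedes it below -/
import Mathlib

section
/- Let f ∈ D(T). The following assertions are equivalent: (1) [f]_ℕ = [f]_ℤ; (2) f belongs to the closure in D(T) of the linear span of {ζ^n f(ζ) : n ≥ 1}; (3) inf{‖pf‖_{D(T)} : p an analytic polynomial with p(0) = 1} = 0. -/
noncomputable section

open MeasureTheory Set Metric Complex
open scoped Classical ENNReal Real

/-- The unit circle `T` as a subset of `ℂ`. -/
def unitCircle : Set ℂ := Metric.sphere (0 : ℂ) 1

/-- Arc-length measure `|dζ|` on the unit circle, realized as a measure on `ℂ`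
(the image of Lebesgue measure on `(0, 2π]` under `θ ↦ e^{iθ}`). -/
def muT : Measure ℂ :=
  Measure.map (fun θ : ℝ => Complex.exp (Complex.I * θ))
    (volume.restrict (Set.Ioc 0 (2 * Real.pi)))

/-- The `n`-th Fourier coefficient `f̂(n) = (1/2π) ∫_T f(ζ) ζ^{-n} |dζ|`. -/
def fc (f : ℂ → ℂ) (n : ℤ) : ℂ :=
  (1 / (2 * Real.pi)) • ∫ ζ, f ζ * ζ ^ (-n) ∂muT

/-- Membership in `L²(T)`. -/
def MemL2 (f : ℂ → ℂ) : Prop := MeasureTheory.MemLp f 2 muT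

/-- The square of the harmonic Dirichlet norm, `‖f‖²_{D(T)} = Σ_{n∈ℤ} (1+|n|)|f̂(n)|²`. -/
def Dnorm2 (f : ℂ → ℂ) : ℝ≥0∞ :=
  ∑' n : ℤ, ENNReal.ofReal ((1 + (n.natAbs : ℝ)) * ‖fc f n‖ ^ 2)

/-- Membership in the harmonic Dirichlet space `D(T)`. -/
def MemD (f : ℂ → ℂ) : Prop := MemL2 f ∧ Dnorm2 f < ⊤

/-- The linear span of `{ζ^n f(ζ) : n ≥ 0}`: all products `p·f` with `p` an
analytic polynomial. -/
def spanN (f : ℂ → ℂ) : Set (ℂ → ℂ) :=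
  {h | ∃ (N : ℕ) (a : ℕ → ℂ), h = fun ζ => (∑ k ∈ Finset.range N, a k * ζ ^ k) * f ζ}

/-- The linear span of `{ζ^n f(ζ) : n ∈ ℤ}`: all products `p·f` with `p` a
trigonometric polynomial. -/
def spanZ (f : ℂ → ℂ) : Set (ℂ → ℂ) :=
  {h | ∃ (N : ℕ) (a : ℤ → ℂ),
    h = fun ζ => (∑ k ∈ Finset.Icc (-(N : ℤ)) (N : ℤ), a k * ζ ^ k) * f ζ}

/-- The closure of a set `S ⊆ D(T)` in the norm topology of `D(T)`. -/
def closureD (S : Set (ℂ → ℂ)) : Set (ℂ → ℂ) :=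
  {g | MemD g ∧ ∀ ε : ℝ, 0 < ε → ∃ h ∈ S, Dnorm2 (g - h) < ENNReal.ofReal ε}

/-- `[f]_ℕ`, the closure in `D(T)` of the span of `{ζ^n f : n ≥ 0}`. -/
def closSpanN (f : ℂ → ℂ) : Set (ℂ → ℂ) := closureD (spanN f)

/-- `[f]_ℤ`, the closure in `D(T)` of the span of `{ζ^n f : n ∈ ℤ}`. -/
def closSpanZ (f : ℂ → ℂ) : Set (ℂ → ℂ) := closureD (spanZ f)

/-- `f` is cyclic for `D(T)`: `[f]_ℕ = D(T)`. -/
def cyclicD (f : ℂ → ℂ) : Prop := closSpanN f = {g | MemD g}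

/-- The Poisson extension `P[f](rζ) = Σ_{n∈ℤ} f̂(n) r^{|n|} ζ^n`. -/
def poissonExt (f : ℂ → ℂ) (r : ℝ) (ζ : ℂ) : ℂ :=
  ∑' n : ℤ, fc f n * (r ^ n.natAbs : ℝ) * ζ ^ n

/-- The radial limit `f*(ζ) = lim_{r→1⁻} P[f](rζ)` exists and equals `L`. -/
def hasRadialLimit (f : ℂ → ℂ) (ζ : ℂ) (L : ℂ) : Prop :=
  Filter.Tendsto (fun r : ℝ => poissonExt f r ζ) (nhdsWithin 1 (Set.Iio 1)) (nhds L)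

/-- The logarithmic kernel `log (1/|z-w|)` (with value `∞` on the diagonal),
truncated at `0`. -/
def logKer (z w : ℂ) : ℝ≥0∞ :=
  if z = w then ⊤ else ENNReal.ofReal (Real.log (1 / ‖z - w‖))

/-- The logarithmic energy `I(μ) = ∬ log(1/|ζ-ζ'|) dμ(ζ) dμ(ζ')`. -/
def energy (μ : Measure ℂ) : ℝ≥0∞ := ∫⁻ z, ∫⁻ w, logKer z w ∂μ ∂μ

/-- `E` has logarithmic capacity zero: every probability measure supported on a
compact subset of `E` has infinite energy. -/
def capZero (E : Set ℂ) : Prop :=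
  ∀ μ : Measure ℂ, IsProbabilityMeasure μ →
    (∃ K : Set ℂ, IsCompact K ∧ K ⊆ E ∧ μ Kᶜ = 0) → energy μ = ⊤

/-- `D_E = {g ∈ D(T) : g* = 0 quasi-everywhere on E}`. -/
def DirE (E : Set ℂ) : Set (ℂ → ℂ) :=
  {g | MemD g ∧ ∃ S : Set ℂ, capZero S ∧ ∀ ζ ∈ E \ S, hasRadialLimit g ζ 0}

/-- `Lip_β(T)`: continuous functions on `T` with finite `β`-Hölder constant. -/
def MemLip (β : ℝ) (f : ℂ → ℂ) : Prop :=
  ContinuousOn f unitCircle ∧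
    ∃ C : ℝ, ∀ ζ ∈ unitCircle, ∀ ζ' ∈ unitCircle, ‖f ζ - f ζ'‖ ≤ C * ‖ζ - ζ'‖ ^ β

/-- `E` is a Carleson set: `E` has measure zero and `∫_T log(1/d(ζ,E)) |dζ| < ∞`. -/
def IsCarleson (E : Set ℂ) : Prop :=
  muT E = 0 ∧ ∫⁻ ζ, ENNReal.ofReal (Real.log (1 / Metric.infDist ζ E)) ∂muT < ⊤

/-- `φ ∈ C^{1+α}(T)`: as a function of the angle, `φ` is `C¹` and its derivative
is `α`-Hölder on `T`. -/
def MemC1alpha (α : ℝ) (φ : ℂ → ℝ) : Prop :=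
  ContDiff ℝ 1 (fun θ : ℝ => φ (Complex.exp (Complex.I * θ))) ∧
  ∃ C : ℝ, ∀ x y : ℝ,
    |deriv (fun θ : ℝ => φ (Complex.exp (Complex.I * θ))) x -
      deriv (fun θ : ℝ => φ (Complex.exp (Complex.I * θ))) y| ≤
        C * ‖Complex.exp (Complex.I * x) - Complex.exp (Complex.I * y)‖ ^ α


lemma measurable_emap : Measurable (fun θ : ℝ => Complex.exp (Complex.I * θ)) :=
  (Complex.continuous_exp.comp (continuous_const.mul Complex.continuous_ofReal)).measurable

instance muT_finite : IsFiniteMeasure muT := by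
  constructor
  rw [muT, Measure.map_apply measurable_emap MeasurableSet.univ]
  simp only [Set.preimage_univ, Measure.restrict_apply, Set.univ_inter, MeasurableSet.univ]
  exact (by simp : volume (Set.Ioc (0:ℝ) (2*Real.pi)) = ENNReal.ofReal (2*Real.pi)) ▸ ENNReal.ofReal_lt_top

lemma ae_norm_one : ∀ᵐ ζ ∂muT, ‖ζ‖ = 1 := by
  rw [muT, ae_map_iff measurable_emap.aemeasurable]
  · exact ae_of_all _ fun θ => by
      simp [Complex.norm_exp, Complex.mul_re]
  · exact (isClosed_eq continuous_norm continuous_const).measurableSet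

lemma ae_ne_zero : ∀ᵐ ζ ∂muT, ζ ≠ 0 := by
  filter_upwards [ae_norm_one] with ζ h
  intro h0; rw [h0] at h; simp at h

lemma MemL2.integrable_mul_zpow {g : ℂ → ℂ} (hg : MemL2 g) (m : ℤ) :
    Integrable (fun ζ => g ζ * ζ ^ m) muT := by
  have hgi : Integrable g muT := hg.integrable (by norm_num)
  refine Integrable.mono' hgi.norm ?_ ?_
  · exact hg.aestronglyMeasurable.mul (measurable_id.pow_const m).aestronglyMeasurable
  · filter_upwards [ae_norm_one] with ζ h
    rw [norm_mul, norm_zpow, h, one_zpow, mul_one]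

lemma fc_congr_ae {g h : ℂ → ℂ} (hgh : g =ᵐ[muT] h) : fc g = fc h := by
  funext n
  unfold fc
  congr 1
  refine integral_congr_ae ?_
  filter_upwards [hgh] with ζ hζ
  rw [hζ]

lemma Dnorm2_congr_ae {g h : ℂ → ℂ} (hgh : g =ᵐ[muT] h) : Dnorm2 g = Dnorm2 h := by
  unfold Dnorm2; rw [fc_congr_ae hgh]

lemma fc_sub {g h : ℂ → ℂ} (hg : MemL2 g) (hh : MemL2 h) (n : ℤ) :
    fc (g - h) n = fc g n - fc h n := by
  unfold fc
  rw [← smul_sub]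
  congr 1
  rw [← integral_sub (hg.integrable_mul_zpow _) (hh.integrable_mul_zpow _)]
  refine integral_congr_ae (ae_of_all _ fun ζ => ?_)
  simp [sub_mul]

lemma fc_add {g h : ℂ → ℂ} (hg : MemL2 g) (hh : MemL2 h) (n : ℤ) :
    fc (fun ζ => g ζ + h ζ) n = fc g n + fc h n := by
  unfold fc
  rw [← smul_add]
  congr 1
  rw [← integral_add (hg.integrable_mul_zpow _) (hh.integrable_mul_zpow _)]
  refine integral_congr_ae (ae_of_all _ fun ζ => ?_)
  simp [add_mul]

lemma fc_const_mul {g : ℂ → ℂ} (c : ℂ) (n : ℤ) :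
    fc (fun ζ => c * g ζ) n = c * fc g n := by
  unfold fc
  simp only [mul_assoc]
  rw [integral_const_mul, mul_smul_comm]

lemma fc_zero (n : ℤ) : fc (fun _ => (0:ℂ)) n = 0 := by
  unfold fc; simp

lemma Dnorm2_zero : Dnorm2 (fun _ => (0:ℂ)) = 0 := by
  unfold Dnorm2
  simp [fc_zero]

lemma MemL2.of_bounded_mul {g : ℂ → ℂ} (hg : MemL2 g) {φ : ℂ → ℂ} (hφ : AEStronglyMeasurable φ muT)
    {C : ℝ} (hC : ∀ᵐ ζ ∂muT, ‖φ ζ‖ ≤ C) : MemL2 (fun ζ => φ ζ * g ζ) := by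
  have h0 : MemL2 (fun ζ => (C:ℂ) * g ζ) := hg.const_mul _
  refine h0.of_le (hφ.mul hg.aestronglyMeasurable) ?_
  filter_upwards [hC] with ζ h
  rw [norm_mul, norm_mul]
  have : ‖(C:ℂ)‖ = C := by
    rw [Complex.norm_real, Real.norm_eq_abs, _root_.abs_of_nonneg ((norm_nonneg (φ ζ)).trans h)]
  rw [this]
  exact mul_le_mul_of_nonneg_right h (norm_nonneg _)

lemma MemL2.inv_mul {g : ℂ → ℂ} (hg : MemL2 g) : MemL2 (fun ζ => ζ⁻¹ * g ζ) := by
  refine hg.of_bounded_mul (measurable_inv.aestronglyMeasurable) (C := 1) ?_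
  filter_upwards [ae_norm_one] with ζ h
  rw [norm_inv, h]; norm_num

lemma MemL2.id_mul {g : ℂ → ℂ} (hg : MemL2 g) : MemL2 (fun ζ => ζ * g ζ) := by
  refine hg.of_bounded_mul (measurable_id.aestronglyMeasurable) (C := 1) ?_
  filter_upwards [ae_norm_one] with ζ h
  rw [h]

lemma MemL2.polyN_mul {f : ℂ → ℂ} (hf : MemL2 f) (N : ℕ) (a : ℕ → ℂ) :
    MemL2 (fun ζ => (∑ k ∈ Finset.range N, a k * ζ ^ k) * f ζ) := by
  refine hf.of_bounded_mul ?_ (C := ∑ k ∈ Finset.range N, ‖a k‖) ?_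
  · exact Continuous.aestronglyMeasurable (by continuity)
  · filter_upwards [ae_norm_one] with ζ h
    refine (norm_sum_le _ _).trans ?_
    refine Finset.sum_le_sum fun k _ => ?_
    rw [norm_mul, norm_pow, h, one_pow, mul_one]

lemma MemL2.polyZ_mul {f : ℂ → ℂ} (hf : MemL2 f) (N : ℕ) (a : ℤ → ℂ) :
    MemL2 (fun ζ => (∑ k ∈ Finset.Icc (-(N:ℤ)) (N:ℤ), a k * ζ ^ k) * f ζ) := by
  refine hf.of_bounded_mul ?_ (C := ∑ k ∈ Finset.Icc (-(N:ℤ)) (N:ℤ), ‖a k‖) ?_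
  · refine (Finset.aestronglyMeasurable_fun_sum _ fun k _ => ?_)
    exact ((measurable_const.mul (measurable_id.pow_const k)).aestronglyMeasurable)
  · filter_upwards [ae_norm_one] with ζ h
    refine (norm_sum_le _ _).trans ?_
    refine Finset.sum_le_sum fun k _ => ?_
    rw [norm_mul, norm_zpow, h, one_zpow, mul_one]

lemma MemL2.sub {g h : ℂ → ℂ} (hg : MemL2 g) (hh : MemL2 h) : MemL2 (g - h) :=
  MemLp.sub hg hh

-- shift of fourier coefficients
lemma fc_mul_id {g : ℂ → ℂ} (n : ℤ) : fc (fun ζ => ζ * g ζ) n = fc g (n - 1) := by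
  unfold fc
  congr 1
  refine integral_congr_ae ?_
  filter_upwards [ae_ne_zero] with ζ hζ
  have h1 : ζ ^ (-(n-1)) = ζ ^ (-n) * ζ := by
    have h2 := zpow_add₀ hζ (-n) 1
    rw [zpow_one] at h2
    rw [← h2]; ring_nf
  rw [h1]; ring

lemma fc_mul_inv {g : ℂ → ℂ} (n : ℤ) : fc (fun ζ => ζ⁻¹ * g ζ) n = fc g (n + 1) := by
  unfold fc
  congr 1
  refine integral_congr_ae ?_
  filter_upwards [ae_ne_zero] with ζ hζ
  have h1 : ζ ^ (-(n+1)) = ζ ^ (-n) * ζ⁻¹ := by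
    have h2 := zpow_add₀ hζ (-n) (-1)
    rw [zpow_neg_one] at h2
    rw [← h2]; ring_nf
  rw [h1]; ring

lemma natAbs_cast_eq (m : ℤ) : ((m.natAbs : ℝ)) = |(m:ℝ)| := by
  rw [Nat.cast_natAbs]
  exact Int.cast_abs

lemma wt_add_one (m : ℤ) : 1 + (((m+1).natAbs : ℝ)) ≤ 2 * (1 + (m.natAbs : ℝ)) := by
  rw [natAbs_cast_eq, natAbs_cast_eq]
  push_cast
  have h := abs_add_le (m:ℝ) 1
  have h2 := abs_nonneg (m:ℝ)
  simp only [abs_one] at h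
  linarith

lemma wt_sub_one (m : ℤ) : 1 + (((m-1).natAbs : ℝ)) ≤ 2 * (1 + (m.natAbs : ℝ)) := by
  rw [natAbs_cast_eq, natAbs_cast_eq]
  push_cast
  have h := abs_sub (m:ℝ) 1
  have h2 := abs_nonneg (m:ℝ)
  simp only [abs_one] at h
  linarith

lemma ofReal_wt_le (w w' x : ℝ) (hw : 0 ≤ w') (hx : 0 ≤ x) (h : w ≤ 2 * w') :
    ENNReal.ofReal (w * x) ≤ 2 * ENNReal.ofReal (w' * x) := by
  calc ENNReal.ofReal (w * x) ≤ ENNReal.ofReal (2 * (w' * x)) := by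
        refine ENNReal.ofReal_le_ofReal ?_
        nlinarith
    _ = 2 * ENNReal.ofReal (w' * x) := by
        rw [ENNReal.ofReal_mul (by norm_num)]
        norm_num

lemma Dnorm2_mul_id_le (g : ℂ → ℂ) : Dnorm2 (fun ζ => ζ * g ζ) ≤ 2 * Dnorm2 g := by
  unfold Dnorm2
  simp only [fc_mul_id]
  rw [← ENNReal.tsum_mul_left]
  rw [← (Equiv.addRight (1:ℤ)).tsum_eq
    (fun n => ENNReal.ofReal ((1 + (n.natAbs : ℝ)) * ‖fc g (n - 1)‖ ^ 2))]
  refine ENNReal.tsum_le_tsum fun m => ?_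
  simp only [Equiv.coe_addRight, add_sub_cancel_right]
  exact ofReal_wt_le _ _ _ (by positivity) (by positivity) (wt_add_one m)

lemma Dnorm2_mul_inv_le (g : ℂ → ℂ) : Dnorm2 (fun ζ => ζ⁻¹ * g ζ) ≤ 2 * Dnorm2 g := by
  unfold Dnorm2
  simp only [fc_mul_inv]
  rw [← ENNReal.tsum_mul_left]
  rw [← (Equiv.subRight (1:ℤ)).tsum_eq
    (fun n => ENNReal.ofReal ((1 + (n.natAbs : ℝ)) * ‖fc g (n + 1)‖ ^ 2))]
  refine ENNReal.tsum_le_tsum fun m => ?_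
  simp only [Equiv.subRight_apply, sub_add_cancel]
  exact ofReal_wt_le _ _ _ (by positivity) (by positivity) (wt_sub_one m)

lemma Dnorm2_const_mul (c : ℂ) (g : ℂ → ℂ) :
    Dnorm2 (fun ζ => c * g ζ) = ENNReal.ofReal (‖c‖^2) * Dnorm2 g := by
  unfold Dnorm2
  rw [← ENNReal.tsum_mul_left]
  congr 1; funext n
  rw [fc_const_mul, norm_mul, ← ENNReal.ofReal_mul (by positivity)]
  congr 1
  ring

lemma Dnorm2_add_le {u v : ℂ → ℂ} (hu : MemL2 u) (hv : MemL2 v) :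
    Dnorm2 (fun ζ => u ζ + v ζ) ≤ 2 * Dnorm2 u + 2 * Dnorm2 v := by
  unfold Dnorm2
  rw [← ENNReal.tsum_mul_left, ← ENNReal.tsum_mul_left, ← ENNReal.tsum_add]
  refine ENNReal.tsum_le_tsum fun n => ?_
  rw [fc_add hu hv]
  set w : ℝ := 1 + (n.natAbs : ℝ) with hw
  have hw0 : 0 ≤ w := by positivity
  calc ENNReal.ofReal (w * ‖fc u n + fc v n‖ ^ 2)
      ≤ ENNReal.ofReal (2 * (w * ‖fc u n‖^2) + 2 * (w * ‖fc v n‖^2)) := by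
        refine ENNReal.ofReal_le_ofReal ?_
        have h1 := norm_add_le (fc u n) (fc v n)
        have h2 := norm_nonneg (fc u n)
        have h3 := norm_nonneg (fc v n)
        have h4 : ‖fc u n + fc v n‖^2 ≤ 2*‖fc u n‖^2 + 2*‖fc v n‖^2 := by
          have h5 : ‖fc u n + fc v n‖^2 ≤ (‖fc u n‖ + ‖fc v n‖)^2 := by
            exact pow_le_pow_left₀ (norm_nonneg _) h1 2
          nlinarith [sq_nonneg (‖fc u n‖ - ‖fc v n‖)]
        nlinarith
    _ = 2 * ENNReal.ofReal (w * ‖fc u n‖^2) + 2 * ENNReal.ofReal (w * ‖fc v n‖^2) := by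
        rw [ENNReal.ofReal_add (by positivity) (by positivity),
          ENNReal.ofReal_mul (by norm_num : (0:ℝ) ≤ 2),
          ENNReal.ofReal_mul (by norm_num : (0:ℝ) ≤ 2)]
        norm_num

open Polynomial in
lemma eval_range_sum (q : Polynomial ℂ) (ζ : ℂ) :
    Polynomial.eval ζ q = ∑ k ∈ Finset.range (q.natDegree + 1), q.coeff k * ζ ^ k :=
  q.eval_eq_sum_range ζ

open Polynomial in
lemma sum_as_eval (N : ℕ) (a : ℕ → ℂ) (ζ : ℂ) :
    (∑ k ∈ Finset.range N, a k * ζ ^ k)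
      = Polynomial.eval ζ (∑ k ∈ Finset.range N, C (a k) * X ^ k) := by
  rw [Polynomial.eval_finset_sum]
  simp

lemma MemL2.polyeval_mul {f : ℂ → ℂ} (hf : MemL2 f) (p : Polynomial ℂ) :
    MemL2 (fun ζ => Polynomial.eval ζ p * f ζ) := by
  have : (fun ζ => Polynomial.eval ζ p * f ζ)
      = fun ζ => (∑ k ∈ Finset.range (p.natDegree + 1), p.coeff k * ζ ^ k) * f ζ := by
    funext ζ; rw [eval_range_sum]
  rw [this]
  exact hf.polyN_mul _ _

/-- `Hyp f`: `f` is approximable by `ζ·q(ζ)·f`. -/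
def Hyp (f : ℂ → ℂ) : Prop :=
  ∀ ε : ℝ, 0 < ε → ∃ q : Polynomial ℂ,
    Dnorm2 (fun ζ => f ζ - ζ * (Polynomial.eval ζ q * f ζ)) < ENNReal.ofReal ε

/-- `APf f g`: `g` is approximable by `p·f` with `p` an analytic polynomial. -/
def APf (f g : ℂ → ℂ) : Prop :=
  ∀ ε : ℝ, 0 < ε → ∃ p : Polynomial ℂ,
    Dnorm2 (fun ζ => g ζ - Polynomial.eval ζ p * f ζ) < ENNReal.ofReal ε

lemma APf_congr {f g g' : ℂ → ℂ} (hgg : g =ᵐ[muT] g') (h : APf f g) : APf f g' := by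
  intro ε hε
  obtain ⟨p, hp⟩ := h ε hε
  refine ⟨p, ?_⟩
  have : (fun ζ => g ζ - Polynomial.eval ζ p * f ζ)
      =ᵐ[muT] (fun ζ => g' ζ - Polynomial.eval ζ p * f ζ) := by
    filter_upwards [hgg] with ζ hζ; rw [hζ]
  rwa [Dnorm2_congr_ae this] at hp

lemma APf_self (f : ℂ → ℂ) (p : Polynomial ℂ) : APf f (fun ζ => Polynomial.eval ζ p * f ζ) := by
  intro ε hε
  refine ⟨p, ?_⟩
  have : (fun ζ => Polynomial.eval ζ p * f ζ - Polynomial.eval ζ p * f ζ) = fun _ => (0:ℂ) := by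
    funext ζ; ring
  rw [this, Dnorm2_zero]
  exact ENNReal.ofReal_pos.2 hε

lemma combine_helper {A B : ℝ≥0∞} {s t ε : ℝ} (hs : 0 ≤ s) (ht : 0 ≤ t)
    (h1 : A < ENNReal.ofReal s) (h2 : B < ENNReal.ofReal t) (h : 2*s + 2*t ≤ ε) :
    2*A + 2*B < ENNReal.ofReal ε := by
  have e1 : (2:ℝ≥0∞)*A < ENNReal.ofReal (2*s) := by
    rw [ENNReal.ofReal_mul (by norm_num : (0:ℝ) ≤ 2)]
    rw [show ENNReal.ofReal 2 = (2:ℝ≥0∞) by norm_num]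
    exact (ENNReal.mul_lt_mul_iff_right (by norm_num) (by norm_num)).2 h1
  have e2 : (2:ℝ≥0∞)*B < ENNReal.ofReal (2*t) := by
    rw [ENNReal.ofReal_mul (by norm_num : (0:ℝ) ≤ 2)]
    rw [show ENNReal.ofReal 2 = (2:ℝ≥0∞) by norm_num]
    exact (ENNReal.mul_lt_mul_iff_right (by norm_num) (by norm_num)).2 h2
  calc 2*A + 2*B < ENNReal.ofReal (2*s) + ENNReal.ofReal (2*t) := ENNReal.add_lt_add e1 e2
    _ = ENNReal.ofReal (2*s + 2*t) := (ENNReal.ofReal_add (by linarith) (by linarith)).symm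
    _ ≤ ENNReal.ofReal ε := ENNReal.ofReal_le_ofReal h

lemma double_helper {A B : ℝ≥0∞} {s ε : ℝ} (hA : A ≤ 2*B) (hB : B < ENNReal.ofReal s)
    (h : 2*s ≤ ε) : A < ENNReal.ofReal ε := by
  calc A ≤ 2*B := hA
    _ < 2*ENNReal.ofReal s := (ENNReal.mul_lt_mul_iff_right (by norm_num) (by norm_num)).2 hB
    _ = ENNReal.ofReal (2*s) := by
        rw [ENNReal.ofReal_mul (by norm_num : (0:ℝ) ≤ 2)]
        norm_num
    _ ≤ ENNReal.ofReal ε := ENNReal.ofReal_le_ofReal h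

open Polynomial in
lemma APf_inv {f : ℂ → ℂ} (hf : MemL2 f) (hyp : Hyp f) {g : ℂ → ℂ} (hg : MemL2 g)
    (hAP : APf f g) : APf f (fun ζ => ζ⁻¹ * g ζ) := by
  intro ε hε
  obtain ⟨p, hp⟩ := hAP (ε/8) (by linarith)
  set c : ℂ := p.coeff 0 with hc
  have hcpos : 0 < ‖c‖^2 + 1 := by positivity
  obtain ⟨q, hq⟩ := hyp (ε/(8*(‖c‖^2+1))) (by positivity)
  refine ⟨C c * q + p.divX, ?_⟩
  have hae : (fun ζ => (ζ⁻¹ * g ζ) - Polynomial.eval ζ (C c * q + p.divX) * f ζ)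
      =ᵐ[muT] (fun ζ => (ζ⁻¹ * (g ζ - Polynomial.eval ζ p * f ζ))
        + (c * (ζ⁻¹ * f ζ - Polynomial.eval ζ q * f ζ))) := by
    filter_upwards [ae_ne_zero] with ζ hζ
    have hp' : Polynomial.eval ζ p = c + ζ * Polynomial.eval ζ p.divX := by
      conv_lhs => rw [← Polynomial.X_mul_divX_add p]
      simp only [Polynomial.eval_add, Polynomial.eval_mul, Polynomial.eval_X, Polynomial.eval_C]
      ring
    simp only [Polynomial.eval_add, Polynomial.eval_mul, Polynomial.eval_C, hp']
    field_simp
    ring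
  rw [Dnorm2_congr_ae hae]
  have hml1 : MemL2 (fun ζ => g ζ - Polynomial.eval ζ p * f ζ) := hg.sub (hf.polyeval_mul p)
  have hml2 : MemL2 (fun ζ => ζ⁻¹ * f ζ - Polynomial.eval ζ q * f ζ) :=
    (hf.inv_mul).sub (hf.polyeval_mul q)
  have hu2 : MemL2 (fun ζ => ζ⁻¹ * (g ζ - Polynomial.eval ζ p * f ζ)) := hml1.inv_mul
  have hv2 : MemL2 (fun ζ => c * (ζ⁻¹ * f ζ - Polynomial.eval ζ q * f ζ)) := hml2.const_mul c
  refine lt_of_le_of_lt (Dnorm2_add_le hu2 hv2) ?_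
  have hU : Dnorm2 (fun ζ => ζ⁻¹ * (g ζ - Polynomial.eval ζ p * f ζ)) < ENNReal.ofReal (ε/4) :=
    double_helper (Dnorm2_mul_inv_le _) hp (by linarith)
  have hV : Dnorm2 (fun ζ => c * (ζ⁻¹ * f ζ - Polynomial.eval ζ q * f ζ))
      < ENNReal.ofReal (ε/4) := by
    rw [Dnorm2_const_mul]
    have h1 : Dnorm2 (fun ζ => ζ⁻¹ * f ζ - Polynomial.eval ζ q * f ζ)
        < ENNReal.ofReal (2 * (ε/(8*(‖c‖^2+1)))) := by
      refine double_helper ?_ hq le_rfl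
      have hae2 : (fun ζ => ζ⁻¹ * f ζ - Polynomial.eval ζ q * f ζ)
          =ᵐ[muT] (fun ζ => ζ⁻¹ * (f ζ - ζ * (Polynomial.eval ζ q * f ζ))) := by
        filter_upwards [ae_ne_zero] with ζ hζ
        field_simp
      rw [Dnorm2_congr_ae hae2]
      exact Dnorm2_mul_inv_le _
    calc ENNReal.ofReal (‖c‖^2) * Dnorm2 (fun ζ => ζ⁻¹ * f ζ - Polynomial.eval ζ q * f ζ)
        ≤ ENNReal.ofReal (‖c‖^2+1) * Dnorm2 (fun ζ => ζ⁻¹ * f ζ - Polynomial.eval ζ q * f ζ) :=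
          mul_le_mul_left (ENNReal.ofReal_le_ofReal (by linarith)) _
      _ < ENNReal.ofReal (‖c‖^2+1) * ENNReal.ofReal (2 * (ε/(8*(‖c‖^2+1)))) := by
          refine (ENNReal.mul_lt_mul_iff_right ?_ ?_).2 h1
          · simp only [ne_eq, ENNReal.ofReal_eq_zero, not_le]; linarith
          · exact ENNReal.ofReal_ne_top
      _ = ENNReal.ofReal ((‖c‖^2+1) * (2 * (ε/(8*(‖c‖^2+1))))) :=
          (ENNReal.ofReal_mul (by positivity)).symm
      _ = ENNReal.ofReal (ε/4) := by
          congr 1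
          field_simp
          ring
  exact combine_helper (by linarith) (by linarith) hU hV (by linarith)

lemma MemL2.invpow_mul {g : ℂ → ℂ} (hg : MemL2 g) (m : ℕ) :
    MemL2 (fun ζ => (ζ⁻¹)^m * g ζ) := by
  refine hg.of_bounded_mul ((measurable_inv.pow_const m).aestronglyMeasurable) (C := 1) ?_
  filter_upwards [ae_norm_one] with ζ h
  rw [norm_pow, norm_inv, h]; norm_num

lemma APf_invpow {f : ℂ → ℂ} (hf : MemL2 f) (hyp : Hyp f) (m : ℕ) {g : ℂ → ℂ} (hg : MemL2 g)
    (hAP : APf f g) : APf f (fun ζ => (ζ⁻¹)^m * g ζ) := by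
  induction m with
  | zero => simpa using hAP
  | succ m ih =>
    have h1 : (fun ζ => (ζ⁻¹)^(m+1) * g ζ) = fun ζ => ζ⁻¹ * ((ζ⁻¹)^m * g ζ) := by
      funext ζ; rw [pow_succ]; ring
    rw [h1]
    exact APf_inv hf hyp (hg.invpow_mul m) ih

open Polynomial in
lemma APf_trig {f : ℂ → ℂ} (hf : MemL2 f) (hyp : Hyp f) (N : ℕ) (a : ℤ → ℂ) :
    APf f (fun ζ => (∑ k ∈ Finset.Icc (-(N:ℤ)) (N:ℤ), a k * ζ ^ k) * f ζ) := by
  set r : Polynomial ℂ := ∑ j ∈ Finset.range (2*N+1), C (a ((j:ℤ) - N)) * X ^ j with hr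
  have key : (fun ζ => (ζ⁻¹)^N * (Polynomial.eval ζ r * f ζ))
      =ᵐ[muT] (fun ζ => (∑ k ∈ Finset.Icc (-(N:ℤ)) (N:ℤ), a k * ζ ^ k) * f ζ) := by
    filter_upwards [ae_ne_zero] with ζ hζ
    have hev : Polynomial.eval ζ r = ∑ j ∈ Finset.range (2*N+1), a ((j:ℤ) - N) * ζ ^ j := by
      rw [hr, Polynomial.eval_finset_sum]; simp
    have hsum : (ζ⁻¹)^N * Polynomial.eval ζ r
        = ∑ k ∈ Finset.Icc (-(N:ℤ)) (N:ℤ), a k * ζ ^ k := by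
      rw [hev, Finset.mul_sum]
      refine Finset.sum_nbij' (fun j => (j:ℤ) - N) (fun k => (k + N).toNat) ?_ ?_ ?_ ?_ ?_
      · intro j hj
        simp only [Finset.mem_range] at hj
        simp only [Finset.mem_Icc]
        omega
      · intro k hk
        simp only [Finset.mem_Icc] at hk
        simp only [Finset.mem_range]
        omega
      · intro j hj
        simp only [Finset.mem_range] at hj
        omega
      · intro k hk
        simp only [Finset.mem_Icc] at hk
        omega
      · intro j hj
        simp only [Finset.mem_range] at hj
        have h2 : ζ ^ ((j:ℤ) - (N:ℤ)) = ζ ^ j * (ζ⁻¹)^N := by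
          rw [zpow_sub₀ hζ, zpow_natCast, zpow_natCast, div_eq_mul_inv, ← inv_pow]
        rw [h2]
        ring
    rw [← hsum]; ring
  refine APf_congr key ?_
  exact APf_invpow hf hyp N (hf.polyeval_mul r) (APf_self f r)

open Polynomial in
lemma sum_shift (N : ℕ) (a : ℕ → ℂ) (ζ : ℂ) :
    (∑ k ∈ Finset.range N, a k * ζ ^ (k+1))
      = ζ * Polynomial.eval ζ (∑ k ∈ Finset.range N, C (a k) * X ^ k) := by
  rw [← sum_as_eval, Finset.mul_sum]
  refine Finset.sum_congr rfl fun k _ => ?_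
  rw [pow_succ]; ring

lemma sum_shift' (q : Polynomial ℂ) (ζ : ℂ) :
    (∑ k ∈ Finset.range (q.natDegree + 1), q.coeff k * ζ ^ (k+1)) = ζ * Polynomial.eval ζ q := by
  rw [eval_range_sum, Finset.mul_sum]
  refine Finset.sum_congr rfl fun k _ => ?_
  rw [pow_succ]; ring

def natIntEmb : ℕ ↪ ℤ := ⟨Nat.cast, fun a b hab => by exact_mod_cast hab⟩

@[simp] lemma natIntEmb_apply (j : ℕ) : natIntEmb j = (j : ℤ) := rfl

lemma spanN_subset_spanZ (f : ℂ → ℂ) : spanN f ⊆ spanZ f := by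
  rintro h ⟨N, a, rfl⟩
  refine ⟨N, fun k => if 0 ≤ k ∧ k.toNat < N then a k.toNat else 0, ?_⟩
  funext ζ
  congr 1
  symm
  rw [← Finset.sum_subset (s₁ := (Finset.range N).map natIntEmb)
    (fun k hk => ?_) (fun k hk hk2 => ?_)]
  · rw [Finset.sum_map]
    refine Finset.sum_congr rfl fun j hj => ?_
    simp only [Finset.mem_range] at hj
    rw [natIntEmb_apply]
    dsimp only
    rw [if_pos ⟨Int.natCast_nonneg j, by simpa using hj⟩]
    simp
  · simp only [Finset.mem_map] at hk
    obtain ⟨j, hj, rfl⟩ := hk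
    simp only [Finset.mem_range] at hj
    rw [natIntEmb_apply]
    simp only [Finset.mem_Icc]
    omega
  · dsimp only
    rw [if_neg, zero_mul]
    intro ⟨h1, h2⟩
    refine hk2 ?_
    simp only [Finset.mem_map]
    exact ⟨k.toNat, Finset.mem_range.2 h2, by simp [Int.toNat_of_nonneg h1]⟩

/-- membership in the closure of span{ζ^{k+1} f} is equivalent to `Hyp`. -/
lemma mem_iff_hyp (f : ℂ → ℂ) (hf : MemD f) :
    f ∈ closureD {h | ∃ (N : ℕ) (a : ℕ → ℂ),
        h = fun ζ => (∑ k ∈ Finset.range N, a k * ζ ^ (k + 1)) * f ζ} ↔ Hyp f := by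
  constructor
  · rintro ⟨_, happ⟩ ε hε
    obtain ⟨h, ⟨N, a, rfl⟩, hd⟩ := happ ε hε
    refine ⟨∑ k ∈ Finset.range N, Polynomial.C (a k) * Polynomial.X ^ k, ?_⟩
    have heq : (f - fun ζ => (∑ k ∈ Finset.range N, a k * ζ ^ (k + 1)) * f ζ)
        = fun ζ => f ζ - ζ * (Polynomial.eval ζ
            (∑ k ∈ Finset.range N, Polynomial.C (a k) * Polynomial.X ^ k) * f ζ) := by
      funext ζ
      simp only [Pi.sub_apply]
      rw [sum_shift]
      ring
    rwa [heq] at hd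
  · intro hyp
    refine ⟨hf, fun ε hε => ?_⟩
    obtain ⟨q, hq⟩ := hyp ε hε
    refine ⟨fun ζ => (∑ k ∈ Finset.range (q.natDegree + 1), q.coeff k * ζ ^ (k + 1)) * f ζ,
      ⟨q.natDegree + 1, q.coeff, rfl⟩, ?_⟩
    have heq : (f - fun ζ => (∑ k ∈ Finset.range (q.natDegree + 1), q.coeff k * ζ ^ (k + 1)) * f ζ)
        = fun ζ => f ζ - ζ * (Polynomial.eval ζ q * f ζ) := by
      funext ζ
      simp only [Pi.sub_apply]
      rw [sum_shift']
      ring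
    rwa [heq]

lemma partA_forward (f : ℂ → ℂ) (hf : MemD f) (heq : closSpanN f = closSpanZ f) : Hyp f := by
  set invf : ℂ → ℂ := fun ζ => ζ⁻¹ * f ζ with hinvf
  have hinv2 : MemL2 invf := hf.1.inv_mul
  have hinvD : MemD invf := by
    refine ⟨hinv2, lt_of_le_of_lt (Dnorm2_mul_inv_le f) ?_⟩
    exact ENNReal.mul_lt_top (by norm_num) hf.2
  have hmemZ : invf ∈ closSpanZ f := by
    refine ⟨hinvD, fun ε hε => ?_⟩
    refine ⟨invf, ⟨1, fun k => if k = -1 then 1 else 0, ?_⟩, ?_⟩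
    · funext ζ
      have hmem1 : (-1 : ℤ) ∈ Finset.Icc (-((1:ℕ):ℤ)) ((1:ℕ):ℤ) :=
        Finset.mem_Icc.2 ⟨by norm_num, by norm_num⟩
      have hsum1 : (∑ k ∈ Finset.Icc (-((1:ℕ):ℤ)) ((1:ℕ):ℤ),
          (if k = -1 then (1:ℂ) else 0) * ζ ^ k) = ζ ^ (-1 : ℤ) := by
        rw [Finset.sum_eq_single (-1 : ℤ)]
        · simp
        · intro k _ hk; rw [if_neg hk, zero_mul]
        · intro hnot; exact absurd hmem1 hnot
      show ζ⁻¹ * f ζ = _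
      dsimp only
      rw [hsum1, zpow_neg_one]
    · rw [sub_self]
      have : (0 : ℂ → ℂ) = fun _ => (0:ℂ) := rfl
      rw [this, Dnorm2_zero]
      exact ENNReal.ofReal_pos.2 hε
  rw [← heq] at hmemZ
  obtain ⟨_, happ⟩ := hmemZ
  intro ε hε
  obtain ⟨h, ⟨N, a, rfl⟩, hd⟩ := happ (ε/2) (by linarith)
  refine ⟨∑ k ∈ Finset.range N, Polynomial.C (a k) * Polynomial.X ^ k, ?_⟩
  set p := ∑ k ∈ Finset.range N, Polynomial.C (a k) * Polynomial.X ^ k with hp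
  have hae : (fun ζ => f ζ - ζ * (Polynomial.eval ζ p * f ζ))
      =ᵐ[muT] (fun ζ => ζ * (invf ζ - Polynomial.eval ζ p * f ζ)) := by
    filter_upwards [ae_ne_zero] with ζ hζ
    rw [hinvf]
    field_simp
  rw [Dnorm2_congr_ae hae]
  have heq2 : (invf - fun ζ => (∑ k ∈ Finset.range N, a k * ζ ^ k) * f ζ)
      = fun ζ => invf ζ - Polynomial.eval ζ p * f ζ := by
    funext ζ
    simp only [Pi.sub_apply]
    rw [hp, ← sum_as_eval]
  rw [heq2] at hd
  exact double_helper (Dnorm2_mul_id_le _) hd (by linarith)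

lemma partA_backward (f : ℂ → ℂ) (hf : MemD f) (hyp : Hyp f) : closSpanN f = closSpanZ f := by
  ext g
  constructor
  · rintro ⟨hg, happ⟩
    refine ⟨hg, fun ε hε => ?_⟩
    obtain ⟨h, hmem, hd⟩ := happ ε hε
    exact ⟨h, spanN_subset_spanZ f hmem, hd⟩
  · rintro ⟨hg, happ⟩
    refine ⟨hg, fun ε hε => ?_⟩
    obtain ⟨h, ⟨N, a, rfl⟩, hd⟩ := happ (ε/5) (by linarith)
    obtain ⟨p, hp⟩ := APf_trig hf.1 hyp N a (ε/5) (by linarith)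
    refine ⟨fun ζ => (∑ k ∈ Finset.range (p.natDegree + 1), p.coeff k * ζ ^ k) * f ζ,
      ⟨p.natDegree + 1, p.coeff, rfl⟩, ?_⟩
    have heq : (g - fun ζ => (∑ k ∈ Finset.range (p.natDegree + 1), p.coeff k * ζ ^ k) * f ζ)
        = fun ζ => (g ζ - (∑ k ∈ Finset.Icc (-(N:ℤ)) (N:ℤ), a k * ζ ^ k) * f ζ)
            + ((∑ k ∈ Finset.Icc (-(N:ℤ)) (N:ℤ), a k * ζ ^ k) * f ζ
                - Polynomial.eval ζ p * f ζ) := by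
      funext ζ
      simp only [Pi.sub_apply]
      rw [← eval_range_sum]
      ring
    rw [heq]
    have hml1 : MemL2 (fun ζ => g ζ - (∑ k ∈ Finset.Icc (-(N:ℤ)) (N:ℤ), a k * ζ ^ k) * f ζ) :=
      hg.1.sub (hf.1.polyZ_mul N a)
    have hml2 : MemL2 (fun ζ => (∑ k ∈ Finset.Icc (-(N:ℤ)) (N:ℤ), a k * ζ ^ k) * f ζ
        - Polynomial.eval ζ p * f ζ) := (hf.1.polyZ_mul N a).sub (hf.1.polyeval_mul p)
    refine lt_of_le_of_lt (Dnorm2_add_le hml1 hml2) ?_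
    have hd' : Dnorm2 (fun ζ => g ζ - (∑ k ∈ Finset.Icc (-(N:ℤ)) (N:ℤ), a k * ζ ^ k) * f ζ)
        < ENNReal.ofReal (ε/5) := by
      have : (g - fun ζ => (∑ k ∈ Finset.Icc (-(N:ℤ)) (N:ℤ), a k * ζ ^ k) * f ζ)
          = fun ζ => g ζ - (∑ k ∈ Finset.Icc (-(N:ℤ)) (N:ℤ), a k * ζ ^ k) * f ζ := rfl
      rwa [this] at hd
    exact combine_helper (by linarith) (by linarith) hd' hp (by linarith)

lemma partB (f : ℂ → ℂ) (hf : MemD f) :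
    (f ∈ closureD {h | ∃ (N : ℕ) (a : ℕ → ℂ),
        h = fun ζ => (∑ k ∈ Finset.range N, a k * ζ ^ (k + 1)) * f ζ}) ↔
      ∀ ε : ℝ, 0 < ε → ∃ (N : ℕ) (a : ℕ → ℂ), a 0 = 1 ∧
        Dnorm2 (fun ζ => (∑ k ∈ Finset.range (N + 1), a k * ζ ^ k) * f ζ)
          < ENNReal.ofReal ε := by
  constructor
  · rintro ⟨_, happ⟩ ε hε
    obtain ⟨h, ⟨N, a, rfl⟩, hd⟩ := happ ε hε
    refine ⟨N, fun k => if k = 0 then 1 else -(a (k-1)), if_pos rfl, ?_⟩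
    have heq : (fun ζ => (∑ k ∈ Finset.range (N+1),
          (fun k => if k = 0 then (1:ℂ) else -(a (k-1))) k * ζ ^ k) * f ζ)
        = f - (fun ζ => (∑ k ∈ Finset.range N, a k * ζ ^ (k+1)) * f ζ) := by
      funext ζ
      simp only [Pi.sub_apply]
      rw [Finset.sum_range_succ']
      simp only [Nat.succ_ne_zero, if_false, Nat.add_sub_cancel, reduceIte]
      have hneg : ∑ i ∈ Finset.range N, -(a i) * ζ ^ (i+1)
          = -∑ i ∈ Finset.range N, a i * ζ ^ (i+1) := by
        rw [← Finset.sum_neg_distrib]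
        exact Finset.sum_congr rfl fun i _ => by ring
      rw [hneg]
      ring
    rw [heq]
    exact hd
  · intro H
    refine ⟨hf, fun ε hε => ?_⟩
    obtain ⟨N, a, ha0, hd⟩ := H ε hε
    refine ⟨fun ζ => (∑ k ∈ Finset.range N, (-(a (k+1))) * ζ ^ (k+1)) * f ζ,
      ⟨N, fun k => -(a (k+1)), rfl⟩, ?_⟩
    have heq : (f - fun ζ => (∑ k ∈ Finset.range N, (-(a (k+1))) * ζ ^ (k+1)) * f ζ)
        = fun ζ => (∑ k ∈ Finset.range (N+1), a k * ζ ^ k) * f ζ := by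
      funext ζ
      simp only [Pi.sub_apply]
      rw [Finset.sum_range_succ']
      have hneg : ∑ i ∈ Finset.range N, -(a (i+1)) * ζ ^ (i+1)
          = -∑ i ∈ Finset.range N, a (i+1) * ζ ^ (i+1) := by
        rw [← Finset.sum_neg_distrib]
        exact Finset.sum_congr rfl fun i _ => by ring
      rw [hneg, ha0]
      ring
    rw [heq]
    exact hd


/-- Lemma 4 of the paper. For `f ∈ D(T)` the following are
equivalent: (1) `[f]_ℕ = [f]_ℤ`; (2) `f` belongs to the closure of the span of
`{ζ^n f : n ≥ 1}`; (3) the infimum of `‖pf‖_{D(T)}` over analytic polynomials `p`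
with `p(0) = 1` is zero. -/
theorem statement5 (f : ℂ → ℂ) (hf : MemD f) :
    (closSpanN f = closSpanZ f ↔
      f ∈ closureD {h | ∃ (N : ℕ) (a : ℕ → ℂ),
        h = fun ζ => (∑ k ∈ Finset.range N, a k * ζ ^ (k + 1)) * f ζ}) ∧
    ((f ∈ closureD {h | ∃ (N : ℕ) (a : ℕ → ℂ),
        h = fun ζ => (∑ k ∈ Finset.range N, a k * ζ ^ (k + 1)) * f ζ}) ↔
      ∀ ε : ℝ, 0 < ε → ∃ (N : ℕ) (a : ℕ → ℂ), a 0 = 1 ∧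
        Dnorm2 (fun ζ => (∑ k ∈ Finset.range (N + 1), a k * ζ ^ k) * f ζ)
          < ENNReal.ofReal ε) := by
  constructor
  · rw [mem_iff_hyp f hf]
    exact ⟨fun h => partA_forward f hf h, fun h => partA_backward f hf h⟩
  · exact partB f hf
end
end

section
/- For β ∈ (0,1], let E_β := {e^{i/(log n)^β} : n ∈ ℕ, n ≥ 2} ∪ {1}. Then E_β is a closed countable subset of T, E_β has logarithmic capacity zero (c(E_β) = 0), and E_β is not a Carleson set, i.e. ∫_T log(1/d(ζ, E_β)) |dζ| = ∞. -/
noncomputable section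

open MeasureTheory Set Metric Complex
open scoped Classical ENNReal Real

/-- The set `E_β = {e^{i/(log n)^β} : n ≥ 2} ∪ {1}`. -/
def Ebeta (β : ℝ) : Set ℂ :=
  {z | ∃ n : ℕ, 2 ≤ n ∧ z = Complex.exp (Complex.I * ((1 / Real.log (n : ℝ) ^ β : ℝ) : ℂ))} ∪ {1}

namespace Stmt13


lemma circle_mem (θ : ℝ) : Complex.exp (Complex.I * θ) ∈ unitCircle := by
  simp [unitCircle, mem_sphere_zero_iff_norm, Complex.norm_exp]

lemma exp_inj_on {θ θ' : ℝ} (h : θ ∈ Set.Ioo 0 (2*Real.pi)) (h' : θ' ∈ Set.Ico 0 (2*Real.pi))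
    (he : Complex.exp (Complex.I * θ) = Complex.exp (Complex.I * θ')) : θ = θ' := by
  rw [Complex.exp_eq_exp_iff_exists_int] at he
  obtain ⟨n, hn⟩ := he
  have him : θ = θ' + n * (2*Real.pi) := by
    have := congrArg Complex.im hn
    simpa using this
  have hπ : 0 < Real.pi := Real.pi_pos
  have h1 : -1 < (n:ℝ) := by nlinarith [h.1, h.2, h'.1, h'.2]
  have h2 : (n:ℝ) < 1 := by nlinarith [h.1, h.2, h'.1, h'.2]
  have : n = 0 := by
    have h1' : -1 < n := by exact_mod_cast h1
    have h2' : n < 1 := by exact_mod_cast h2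
    omega
  subst this
  simpa using him

lemma rpow_gap {β : ℝ} (hβ0 : 0 < β) {a b : ℝ} (ha : 0 < a) (hab : a < b) :
    β * b ^ (-β-1) * (b - a) ≤ a ^ (-β) - b ^ (-β) ∧
    a ^ (-β) - b ^ (-β) ≤ β * a ^ (-β-1) * (b - a) := by
  have hb : 0 < b := ha.trans hab
  have hcont : ContinuousOn (fun x : ℝ => x ^ (-β)) (Set.Icc a b) := by
    intro x hx
    exact (Real.continuousAt_rpow_const x (-β) (Or.inl (ha.trans_le hx.1).ne')).continuousWithinAt
  have hdiff : DifferentiableOn ℝ (fun x : ℝ => x ^ (-β)) (Set.Ioo a b) := by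
    intro x hx
    exact ((Real.hasDerivAt_rpow_const (p := -β) (Or.inl (ha.trans hx.1).ne')).differentiableAt).differentiableWithinAt
  obtain ⟨c, hc, hderiv⟩ := exists_deriv_eq_slope (fun x : ℝ => x ^ (-β)) hab hcont hdiff
  have hc0 : 0 < c := ha.trans hc.1
  have hder : deriv (fun x : ℝ => x ^ (-β)) c = -β * c ^ (-β - 1) := by
    rw [Real.deriv_rpow_const c (-β)]
  have hba : 0 < b - a := by linarith
  have key : a ^ (-β) - b ^ (-β) = β * c ^ (-β-1) * (b - a) := by
    rw [hder] at hderiv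
    field_simp at hderiv
    nlinarith [hderiv]
  have hm1 : b ^ (-β-1) ≤ c ^ (-β-1) :=
    Real.rpow_le_rpow_of_nonpos hc0 hc.2.le (by linarith)
  have hm2 : c ^ (-β-1) ≤ a ^ (-β-1) :=
    Real.rpow_le_rpow_of_nonpos ha hc.1.le (by linarith)
  constructor
  · rw [key]; gcongr
  · rw [key]; gcongr



def th (β : ℝ) (n : ℕ) : ℝ := 1 / Real.log (n : ℝ) ^ β

variable {β : ℝ}

lemma th_pos (hβ0 : 0 < β) {n : ℕ} (hn : 2 ≤ n) : 0 < th β n := by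
  have h1 : (1:ℝ) < n := by exact_mod_cast hn.trans_lt' one_lt_two
  have := Real.rpow_pos_of_pos (Real.log_pos h1) β
  unfold th
  exact one_div_pos.mpr this

lemma th_le_th (hβ0 : 0 < β) {m n : ℕ} (hm : 2 ≤ m) (hmn : m ≤ n) : th β n ≤ th β m := by
  have h1 : (1:ℝ) < m := by exact_mod_cast hm.trans_lt' one_lt_two
  have hlog : Real.log m ≤ Real.log n := Real.log_le_log (by positivity) (by exact_mod_cast hmn)
  have h2 := Real.rpow_le_rpow (Real.log_pos h1).le hlog hβ0.le
  have h3 := Real.rpow_pos_of_pos (Real.log_pos h1) β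
  exact one_div_le_one_div_of_le h3 h2

lemma th_lt_th (hβ0 : 0 < β) {m n : ℕ} (hm : 2 ≤ m) (hmn : m < n) : th β n < th β m := by
  have h1 : (1:ℝ) < m := by exact_mod_cast hm.trans_lt' one_lt_two
  have hlog : Real.log m < Real.log n := Real.log_lt_log (by positivity) (by exact_mod_cast hmn)
  have h2 := Real.rpow_lt_rpow (Real.log_pos h1).le hlog hβ0
  have h3 := Real.rpow_pos_of_pos (Real.log_pos h1) β
  exact one_div_lt_one_div_of_lt h3 h2

lemma th_lt_two (hβ0 : 0 < β) (hβ1 : β ≤ 1) {n : ℕ} (hn : 2 ≤ n) : th β n < 2 := by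
  have h2 : th β n ≤ th β 2 := th_le_th hβ0 le_rfl hn
  have hlog2 : (0.6931471803 : ℝ) < Real.log 2 := Real.log_two_gt_d9
  have hlog2' : Real.log 2 ≤ 1 := by
    have := Real.log_le_sub_one_of_pos (by norm_num : (0:ℝ) < 2); linarith
  have hb : Real.log 2 ≤ Real.log 2 ^ β := by
    have := Real.rpow_le_rpow_of_exponent_ge (by linarith) hlog2' hβ1
    simpa using this
  have : th β 2 ≤ 1 / Real.log 2 := by
    unfold th
    push_cast
    exact one_div_le_one_div_of_le (by linarith) hb
  have : th β 2 < 2 := by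
    have h14 : (1:ℝ) / Real.log 2 < 2 := by
      rw [div_lt_iff₀ (by linarith)]
      linarith
    linarith
  linarith

lemma tendsto_th (hβ0 : 0 < β) :
    Filter.Tendsto (fun k : ℕ => th β (k + 2)) Filter.atTop (nhds 0) := by
  have h1 : Filter.Tendsto (fun k : ℕ => Real.log ((k + 2 : ℕ) : ℝ)) Filter.atTop Filter.atTop :=
    Real.tendsto_log_atTop.comp (tendsto_natCast_atTop_atTop.comp (Filter.tendsto_add_atTop_nat 2))
  have h2 := (tendsto_rpow_atTop hβ0).comp h1
  simpa [th, one_div, Function.comp_def, Pi.inv_def] using h2.inv_tendsto_atTop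

lemma Ebeta_eq :
    Ebeta β = insert 1 (Set.range (fun k : ℕ => Complex.exp (Complex.I * (th β (k + 2) : ℝ)))) := by
  ext z
  simp only [Ebeta, Set.mem_union, Set.mem_setOf_eq, Set.mem_singleton_iff, Set.mem_insert_iff,
    Set.mem_range]
  constructor
  · rintro (⟨n, hn, rfl⟩ | rfl)
    · right
      exact ⟨n - 2, by rw [Nat.sub_add_cancel hn]; rfl⟩
    · left; rfl
  · rintro (rfl | ⟨k, rfl⟩)
    · right; rfl
    · left; exact ⟨k + 2, by omega, rfl⟩

lemma Ebeta_closed (hβ0 : 0 < β) : IsClosed (Ebeta β) := by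
  rw [Ebeta_eq]
  apply IsCompact.isClosed
  apply Filter.Tendsto.isCompact_insert_range
  have : Filter.Tendsto (fun k : ℕ => Complex.I * (th β (k + 2) : ℂ)) Filter.atTop (nhds 0) := by
    have hc : Filter.Tendsto (fun k : ℕ => ((th β (k + 2) : ℝ) : ℂ)) Filter.atTop (nhds 0) := by
      have := (Complex.continuous_ofReal.tendsto 0).comp (tendsto_th hβ0)
      simpa [Function.comp_def] using this
    simpa using hc.const_mul Complex.I
  have := (Complex.continuous_exp.tendsto 0).comp this
  simpa [Function.comp_def] using this

lemma Ebeta_countable : (Ebeta β).Countable := by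
  rw [Ebeta_eq]
  exact (Set.countable_range _).insert 1

lemma capZero_of_countable {E : Set ℂ} (hE : E.Countable) : capZero E := by
  rintro μ hμ ⟨K, hK, hKE, hKc⟩
  have hK1 : μ K ≠ 0 := by
    intro h0
    have huniv : μ Set.univ ≤ μ K + μ Kᶜ := by
      rw [← Set.union_compl_self K]; exact measure_union_le _ _
    rw [h0, hKc, measure_univ] at huniv
    simp at huniv
  have hKcnt : K.Countable := hE.mono hKE
  have hex : ∃ z₀ ∈ K, μ {z₀} ≠ 0 := by
    by_contra hall
    push_neg at hall
    have : μ (⋃ z ∈ K, {z}) = 0 := (measure_biUnion_null_iff hKcnt).2 hall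
    rw [Set.biUnion_of_singleton] at this
    exact hK1 this
  obtain ⟨z₀, _, hz₀⟩ := hex
  have hinner : ∫⁻ w, logKer z₀ w ∂μ = ⊤ := by
    have hle : Set.indicator {z₀} (fun _ => (⊤ : ℝ≥0∞)) ≤ fun w => logKer z₀ w := by
      intro w
      rcases eq_or_ne w z₀ with rfl | hw
      · simp [logKer]
      · simp [Set.indicator_apply, hw]
    have h := lintegral_mono (μ := μ) hle
    rw [lintegral_indicator (measurableSet_singleton z₀), setLIntegral_const,
      ENNReal.top_mul hz₀] at h
    exact top_le_iff.mp h
  have hle2 : Set.indicator {z₀} (fun _ => (⊤ : ℝ≥0∞)) ≤ fun z => ∫⁻ w, logKer z w ∂μ := by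
    intro z
    rcases eq_or_ne z z₀ with rfl | hz
    · simp [hinner]
    · simp [Set.indicator_apply, hz]
  have h := lintegral_mono (μ := μ) hle2
  rw [lintegral_indicator (measurableSet_singleton z₀), setLIntegral_const,
    ENNReal.top_mul hz₀] at h
  unfold energy
  exact top_le_iff.mp h



lemma dist_exp_le (θ θ' : ℝ) :
    dist (Complex.exp (Complex.I * θ)) (Complex.exp (Complex.I * θ')) ≤ |θ - θ'| := by
  have h := (lipschitzWith_circleMap 0 1).dist_le_mul θ θ'
  simpa [circleMap, mul_comm, Real.dist_eq] using h

lemma log_ge_one {n : ℕ} (hn : 3 ≤ n) : (1:ℝ) ≤ Real.log n := by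
  have h3 : (3:ℝ) ≤ n := by exact_mod_cast hn
  have he : Real.exp 1 ≤ (n:ℝ) := by
    have := Real.exp_one_lt_d9
    linarith
  calc (1:ℝ) = Real.log (Real.exp 1) := (Real.log_exp 1).symm
    _ ≤ Real.log n := Real.log_le_log (Real.exp_pos 1) he

lemma gap_le {β : ℝ} (hβ0 : 0 < β) (hβ1 : β ≤ 1) {n : ℕ} (hn : 3 ≤ n) :
    th β n - th β (n + 1) ≤ 1 / n := by
  have hn0 : (0:ℝ) < n := by positivity
  have ha : (1:ℝ) ≤ Real.log n := log_ge_one hn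
  have ha0 : (0:ℝ) < Real.log n := lt_of_lt_of_le one_pos ha
  have hab : Real.log n < Real.log (n + 1 : ℕ) := by
    apply Real.log_lt_log hn0
    push_cast; linarith
  obtain ⟨-, h2⟩ := rpow_gap hβ0 ha0 hab
  have e1 : th β n = Real.log n ^ (-β) := by
    rw [th, Real.rpow_neg ha0.le, one_div]
  have e2 : th β (n + 1) = Real.log ((n + 1 : ℕ) : ℝ) ^ (-β) := by
    rw [th, Real.rpow_neg (by linarith), one_div]
  have hb1 : Real.log n ^ (-β - 1) ≤ 1 :=
    Real.rpow_le_one_of_one_le_of_nonpos ha (by linarith)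
  have hdiff : Real.log ((n + 1 : ℕ) : ℝ) - Real.log n ≤ 1 / n := by
    have hlog : Real.log ((n + 1 : ℕ) : ℝ) - Real.log n = Real.log (((n:ℝ) + 1) / n) := by
      rw [Real.log_div (by positivity) (by positivity)]
      push_cast; ring_nf
    rw [hlog]
    have := Real.log_le_sub_one_of_pos (show (0:ℝ) < ((n:ℝ) + 1) / n by positivity)
    have heq : ((n:ℝ) + 1) / n - 1 = 1 / n := by field_simp; ring
    linarith
  rw [e1, e2]
  have hba : (0:ℝ) ≤ Real.log ((n + 1 : ℕ) : ℝ) - Real.log n := by linarith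
  calc Real.log n ^ (-β) - Real.log ((n + 1 : ℕ) : ℝ) ^ (-β)
      ≤ β * Real.log n ^ (-β - 1) * (Real.log ((n + 1 : ℕ) : ℝ) - Real.log n) := h2
    _ ≤ 1 * 1 * (1 / n) := by
        apply mul_le_mul (mul_le_mul hβ1 hb1 (by positivity) zero_le_one) hdiff hba
        norm_num
    _ = 1 / n := by ring

lemma dyadic_ge {β : ℝ} (hβ0 : 0 < β) {k : ℕ} (hk : 1 ≤ k) :
    Real.log 2 ^ (-β) * (β * ((k:ℝ) + 1) ^ (-β - 1)) ≤ th β (2 ^ k) - th β (2 ^ (k + 1)) := by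
  have hk0 : (0:ℝ) < k := by exact_mod_cast hk
  have hlog2 : (0:ℝ) < Real.log 2 := Real.log_pos (by norm_num)
  have e : ∀ m : ℕ, 1 ≤ m → th β (2 ^ m) = (m:ℝ) ^ (-β) * Real.log 2 ^ (-β) := by
    intro m hm
    have h1 : ((2 ^ m : ℕ) : ℝ) = (2:ℝ) ^ m := by push_cast; ring
    have h2 : Real.log ((2 ^ m : ℕ) : ℝ) = (m:ℝ) * Real.log 2 := by
      rw [h1, Real.log_pow]
    rw [th, h2, Real.mul_rpow (by positivity) hlog2.le,
      Real.rpow_neg (show (0:ℝ) ≤ (m:ℝ) by positivity), Real.rpow_neg hlog2.le, one_div, mul_inv]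
  obtain ⟨h1, -⟩ := rpow_gap hβ0 hk0 (show (k:ℝ) < (k:ℝ) + 1 by linarith)
  rw [e k hk, e (k+1) (by omega)]
  have hcast : (((k+1 : ℕ)):ℝ) = (k:ℝ) + 1 := by push_cast; ring
  rw [hcast]
  have expand : (k:ℝ) ^ (-β) * Real.log 2 ^ (-β) - ((k:ℝ) + 1) ^ (-β) * Real.log 2 ^ (-β)
      = Real.log 2 ^ (-β) * ((k:ℝ) ^ (-β) - ((k:ℝ) + 1) ^ (-β)) := by ring
  rw [expand]
  have h1' : β * ((k:ℝ) + 1) ^ (-β - 1) ≤ (k:ℝ) ^ (-β) - ((k:ℝ) + 1) ^ (-β) := by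
    have := h1; simpa using this
  apply mul_le_mul_of_nonneg_left h1' (by positivity)

lemma not_mem_Ebeta {β : ℝ} (hβ0 : 0 < β) (hβ1 : β ≤ 1) {θ : ℝ}
    (hθ : θ ∈ Set.Ioo 0 (2 * Real.pi)) (hr : ∀ n : ℕ, 2 ≤ n → θ ≠ th β n) :
    Complex.exp (Complex.I * θ) ∉ Ebeta β := by
  have hπ : (3:ℝ) < Real.pi := Real.pi_gt_three
  rintro (⟨n, hn, heq⟩ | h1)
  · have hth : th β n ∈ Set.Ico 0 (2 * Real.pi) := by
      constructor
      · exact (th_pos hβ0 hn).le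
      · have := th_lt_two hβ0 hβ1 hn; linarith
    exact hr n hn (exp_inj_on hθ hth (by rw [heq]; rfl))
  · have h0 : Complex.exp (Complex.I * θ) = Complex.exp (Complex.I * (0:ℝ)) := by
      simp only [Set.mem_singleton_iff] at h1
      rw [h1]; simp
    have := exp_inj_on hθ (by constructor <;> [rfl; positivity] : (0:ℝ) ∈ Set.Ico 0 (2*Real.pi)) h0
    exact absurd this (ne_of_gt hθ.1)

lemma tsum_ofReal_top {a : ℕ → ℝ} (h0 : ∀ n, 0 ≤ a n) (h : ¬ Summable a) :
    ∑' n, ENNReal.ofReal (a n) = ⊤ := by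
  by_contra h'
  exact h ((ENNReal.summable_toReal h').congr (fun n => ENNReal.toReal_ofReal (h0 n)))

lemma dist_small {β : ℝ} (hβ0 : 0 < β) (hβ1 : β ≤ 1) {k : ℕ} (hk : 2 ≤ k) {θ : ℝ}
    (hθ : θ ∈ Set.Ioo (th β (2 ^ (k + 1))) (th β (2 ^ k))) :
    Metric.infDist (Complex.exp (Complex.I * θ)) (Ebeta β) ≤ ((1:ℝ) / 2) ^ k := by
  classical
  set S := Finset.filter (fun m => θ < th β m) (Finset.Icc (2 ^ k) (2 ^ (k + 1))) with hS
  have h2k : (4:ℕ) ≤ 2 ^ k := by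
    calc (4:ℕ) = 2 ^ 2 := by norm_num
    _ ≤ 2 ^ k := Nat.pow_le_pow_right (by norm_num) hk
  have hmemS : 2 ^ k ∈ S := by
    simp only [hS, Finset.mem_filter, Finset.mem_Icc]
    exact ⟨⟨le_refl _, Nat.pow_le_pow_right (by norm_num) (Nat.le_succ k)⟩, hθ.2⟩
  have hSne : S.Nonempty := ⟨_, hmemS⟩
  set n := S.max' hSne with hn
  have hnS : n ∈ S := S.max'_mem hSne
  have hn1 : (2 ^ k ≤ n ∧ n ≤ 2 ^ (k + 1)) ∧ θ < th β n := by
    simpa only [hS, Finset.mem_filter, Finset.mem_Icc] using hnS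
  have hne : n ≠ 2 ^ (k + 1) := by
    intro heq
    rw [heq] at hn1
    exact absurd hθ.1 (not_lt.mpr hn1.2.le)
  have hnlt : n < 2 ^ (k + 1) := lt_of_le_of_ne hn1.1.2 hne
  have hnext : th β (n + 1) ≤ θ := by
    by_contra hcon
    push_neg at hcon
    have hmem : n + 1 ∈ S := by
      simp only [hS, Finset.mem_filter, Finset.mem_Icc]
      exact ⟨⟨by omega, by omega⟩, hcon⟩
    have := S.le_max' _ hmem
    omega
  have hn2 : 2 ≤ n := by omega
  have hmemE : Complex.exp (Complex.I * ((th β n : ℝ) : ℂ)) ∈ Ebeta β :=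
    Or.inl ⟨n, hn2, rfl⟩
  have hd : Metric.infDist (Complex.exp (Complex.I * θ)) (Ebeta β)
      ≤ dist (Complex.exp (Complex.I * θ)) (Complex.exp (Complex.I * ((th β n : ℝ) : ℂ))) :=
    Metric.infDist_le_dist_of_mem hmemE
  have hd2 : dist (Complex.exp (Complex.I * θ)) (Complex.exp (Complex.I * ((th β n : ℝ) : ℂ)))
      ≤ |θ - th β n| := dist_exp_le θ (th β n)
  have habs : |θ - th β n| = th β n - θ := by
    rw [abs_of_nonpos (by linarith [hn1.2])]; ring
  have hgap : th β n - th β (n + 1) ≤ 1 / (n : ℝ) := gap_le hβ0 hβ1 (by omega)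
  have hfinal : (1 : ℝ) / (n : ℝ) ≤ (1 / 2) ^ k := by
    have hcast : ((2:ℝ) ^ k) ≤ (n : ℝ) := by exact_mod_cast hn1.1.1
    have h2kpos : (0:ℝ) < 2 ^ k := by positivity
    have := one_div_le_one_div_of_le h2kpos hcast
    calc (1:ℝ) / n ≤ 1 / 2 ^ k := this
      _ = (1 / 2) ^ k := by rw [div_pow, one_pow]
  calc Metric.infDist (Complex.exp (Complex.I * θ)) (Ebeta β)
      ≤ |θ - th β n| := hd.trans hd2
    _ = th β n - θ := habs
    _ ≤ th β n - th β (n + 1) := by linarith [hnext]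
    _ ≤ 1 / (n : ℝ) := hgap
    _ ≤ (1 / 2) ^ k := hfinal

lemma integrand_ge {β : ℝ} (hβ0 : 0 < β) (hβ1 : β ≤ 1) {k : ℕ} (hk : 2 ≤ k) {θ : ℝ}
    (hθ : θ ∈ Set.Ioo (th β (2 ^ (k + 1))) (th β (2 ^ k)))
    (hne : Complex.exp (Complex.I * θ) ∉ Ebeta β) :
    ENNReal.ofReal ((k : ℝ) * Real.log 2)
      ≤ ENNReal.ofReal (Real.log (1 / Metric.infDist (Complex.exp (Complex.I * θ)) (Ebeta β))) := by
  have hd := dist_small hβ0 hβ1 hk hθ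
  have hpos : 0 < Metric.infDist (Complex.exp (Complex.I * θ)) (Ebeta β) :=
    ((Ebeta_closed hβ0).notMem_iff_infDist_pos ⟨1, Or.inr rfl⟩).1 hne
  apply ENNReal.ofReal_le_ofReal
  have hhalf : (0:ℝ) < (1 / 2) ^ k := by positivity
  have h1 : (2:ℝ) ^ k ≤ 1 / Metric.infDist (Complex.exp (Complex.I * θ)) (Ebeta β) := by
    have := one_div_le_one_div_of_le hpos hd
    calc (2:ℝ) ^ k = 1 / (1 / 2) ^ k := by
          rw [div_pow, one_pow, one_div_one_div]
      _ ≤ 1 / Metric.infDist (Complex.exp (Complex.I * θ)) (Ebeta β) := this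
  calc (k : ℝ) * Real.log 2 = Real.log ((2:ℝ) ^ k) := (Real.log_pow 2 k).symm
    _ ≤ Real.log (1 / Metric.infDist (Complex.exp (Complex.I * θ)) (Ebeta β)) :=
        Real.log_le_log (by positivity) h1

lemma not_summable_c {β : ℝ} (hβ0 : 0 < β) (hβ1 : β ≤ 1) {c : ℝ} (hc : 0 < c) :
    ¬ Summable (fun j : ℕ => c * ((j : ℝ) + 3) ^ (-β)) := by
  intro hs
  have h1 : Summable (fun j : ℕ => ((j : ℝ) + 3) ^ (-β)) :=
    (summable_mul_left_iff hc.ne').mp hs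
  have h2 : Summable (fun j : ℕ => ((j + 3 : ℕ) : ℝ) ^ (-β)) := by
    refine h1.congr fun j => ?_
    push_cast; ring_nf
  have h3 : Summable (fun n : ℕ => (n : ℝ) ^ (-β)) := (summable_nat_add_iff 3).mp h2
  have := Real.summable_nat_rpow.mp h3
  linarith

lemma lint_top {β : ℝ} (hβ0 : 0 < β) (hβ1 : β ≤ 1) :
    ∫⁻ θ in Set.Ioc 0 (2 * Real.pi),
      ENNReal.ofReal (Real.log (1 / Metric.infDist (Complex.exp (Complex.I * θ)) (Ebeta β)))
        = ⊤ := by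
  have hπ : (3:ℝ) < Real.pi := Real.pi_gt_three
  set F : ℝ → ℝ≥0∞ := fun θ =>
    ENNReal.ofReal (Real.log (1 / Metric.infDist (Complex.exp (Complex.I * θ)) (Ebeta β)))
    with hF
  set T0 : Set ℝ := Set.range (th β) with hT0
  have hT0c : T0.Countable := Set.countable_range _
  have hT0m : MeasurableSet T0 := hT0c.measurableSet
  have hT0null : volume T0 = 0 := hT0c.measure_zero _
  set J : ℕ → Set ℝ := fun j => Set.Ioo (th β (2 ^ (j + 3))) (th β (2 ^ (j + 2))) \ T0 with hJ
  have hpow2 : ∀ m : ℕ, 2 ≤ 2 ^ (m + 2) := fun m => by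
    have : (2:ℕ) ^ 1 ≤ 2 ^ (m + 2) := Nat.pow_le_pow_right (by norm_num) (by omega)
    simpa using this
  have hJm : ∀ j, MeasurableSet (J j) := fun j => measurableSet_Ioo.diff hT0m
  have hJsub : ∀ j, J j ⊆ Set.Ioo 0 (2 * Real.pi) := by
    intro j x hx
    obtain ⟨⟨hx1, hx2⟩, -⟩ := hx
    constructor
    · exact lt_trans (th_pos hβ0 (hpow2 (j+1))) hx1
    · have h4 : th β (2 ^ (j + 2)) ≤ th β 2 := th_le_th hβ0 le_rfl (hpow2 j)
      have := th_lt_two hβ0 hβ1 (le_refl 2)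
      linarith
  have hdisj : Pairwise (Function.onFun Disjoint J) := by
    have key : ∀ i j, i < j → Disjoint (J i) (J j) := by
      intro i j hij
      rw [Set.disjoint_left]
      rintro x ⟨⟨hxi1, hxi2⟩, -⟩ ⟨⟨hxj1, hxj2⟩, -⟩
      have h1 : th β (2 ^ (j + 2)) ≤ th β (2 ^ (i + 3)) := by
        apply th_le_th hβ0 (hpow2 (i+1))
        exact Nat.pow_le_pow_right (by norm_num) (by omega)
      linarith
    intro i j hij
    rcases hij.lt_or_gt with h | h
    · exact key i j h
    · exact (key j i h).symm
  have hvol : ∀ j, volume (J j) =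
      ENNReal.ofReal (th β (2 ^ (j + 2)) - th β (2 ^ (j + 3))) := by
    intro j
    rw [hJ]
    simp only
    rw [measure_diff_null hT0null, Real.volume_Ioo]
  have hblock : ∀ j : ℕ, ENNReal.ofReal (((j:ℝ) + 2) * Real.log 2) * volume (J j)
      ≤ ∫⁻ θ in J j, F θ := by
    intro j
    rw [← setLIntegral_const (J j) _]
    apply setLIntegral_mono' (hJm j)
    intro x hx
    obtain ⟨hxIoo, hxT0⟩ := hx
    have hxIoo' : x ∈ Set.Ioo (th β (2 ^ ((j + 2) + 1))) (th β (2 ^ (j + 2))) := by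
      have : j + 2 + 1 = j + 3 := by omega
      rw [this]; exact hxIoo
    have hne : Complex.exp (Complex.I * x) ∉ Ebeta β := by
      apply not_mem_Ebeta hβ0 hβ1 (hJsub j ⟨hxIoo, hxT0⟩)
      intro n hn hx'
      exact hxT0 ⟨n, hx'.symm⟩
    have := integrand_ge hβ0 hβ1 (show 2 ≤ j + 2 by omega) hxIoo' hne
    have hcast : (((j + 2 : ℕ)) : ℝ) = (j:ℝ) + 2 := by push_cast; ring
    rw [hcast] at this
    exact this
  set c : ℝ := β * Real.log 2 ^ (1 - β) / 2 with hc
  have hlog2 : (0:ℝ) < Real.log 2 := Real.log_pos (by norm_num)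
  have hcpos : 0 < c := by
    have := Real.rpow_pos_of_pos hlog2 (1 - β)
    positivity
  have hterm : ∀ j : ℕ, ENNReal.ofReal (c * ((j:ℝ) + 3) ^ (-β))
      ≤ ENNReal.ofReal (((j:ℝ) + 2) * Real.log 2) * volume (J j) := by
    intro j
    rw [hvol j, ← ENNReal.ofReal_mul (by positivity)]
    apply ENNReal.ofReal_le_ofReal
    set k : ℕ := j + 2 with hk
    have hkc : ((k:ℕ):ℝ) = (j:ℝ) + 2 := by rw [hk]; push_cast; ring
    have hgap := dyadic_ge hβ0 (show 1 ≤ k by omega)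
    have hk3 : k + 1 = j + 3 := by omega
    have hkk : ((k:ℝ) + 1) = (j:ℝ) + 3 := by rw [hk]; push_cast; ring
    -- gap ≥ log2^{-β} * (β * (j+3)^{-β-1})
    rw [hkk] at hgap
    have hgap' : Real.log 2 ^ (-β) * (β * ((j:ℝ) + 3) ^ (-β - 1))
        ≤ th β (2 ^ (j + 2)) - th β (2 ^ (j + 3)) := by
      have e1 : (2:ℕ) ^ k = 2 ^ (j + 2) := by rw [hk]
      have e2 : (2:ℕ) ^ (k + 1) = 2 ^ (j + 3) := by rw [hk]
      rw [e1, e2] at hgap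
      exact hgap
    have hsplit : ((j:ℝ) + 3) ^ (-β) = ((j:ℝ) + 3) ^ (-β - 1) * ((j:ℝ) + 3) := by
      rw [← Real.rpow_add_one (by positivity) (-β - 1)]
      norm_num
    have hpow_pos : (0:ℝ) < ((j:ℝ) + 3) ^ (-β - 1) := Real.rpow_pos_of_pos (by positivity) _
    have hrw : Real.log 2 * Real.log 2 ^ (-β) = Real.log 2 ^ (1 - β) := by
      rw [show (1:ℝ) - β = 1 + (-β) by ring, Real.rpow_add hlog2, Real.rpow_one]
    have hj2 : (j:ℝ) + 3 ≤ 2 * ((j:ℝ) + 2) := by linarith [Nat.cast_nonneg (α := ℝ) j]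
    calc c * ((j:ℝ) + 3) ^ (-β)
        = (β * Real.log 2 ^ (1 - β)) * (((j:ℝ) + 3) * ((j:ℝ) + 3) ^ (-β - 1)) / 2 := by
          rw [hsplit, hc]; ring
      _ ≤ (β * Real.log 2 ^ (1 - β)) * ((2 * ((j:ℝ) + 2)) * ((j:ℝ) + 3) ^ (-β - 1)) / 2 := by
          have hb := Real.rpow_pos_of_pos hlog2 (1 - β)
          apply div_le_div_of_nonneg_right ?_ (by norm_num)
          apply mul_le_mul_of_nonneg_left ?_ (by positivity)
          exact mul_le_mul_of_nonneg_right hj2 hpow_pos.le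
      _ = ((j:ℝ) + 2) * (Real.log 2 * (Real.log 2 ^ (-β) * (β * ((j:ℝ) + 3) ^ (-β - 1)))) := by
          rw [← hrw]; ring
      _ ≤ ((j:ℝ) + 2) * (Real.log 2 * (th β (2 ^ (j + 2)) - th β (2 ^ (j + 3)))) := by
          apply mul_le_mul_of_nonneg_left ?_ (by positivity)
          exact mul_le_mul_of_nonneg_left hgap' hlog2.le
      _ = ((j:ℝ) + 2) * Real.log 2 * (th β (2 ^ (j + 2)) - th β (2 ^ (j + 3))) := by ring
  have hsum : ∑' j : ℕ, ENNReal.ofReal (c * ((j:ℝ) + 3) ^ (-β)) = ⊤ := by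
    apply tsum_ofReal_top
    · intro j
      have := Real.rpow_pos_of_pos (show (0:ℝ) < (j:ℝ) + 3 by positivity) (-β)
      positivity
    · exact not_summable_c hβ0 hβ1 hcpos
  rw [← top_le_iff]
  calc (⊤ : ℝ≥0∞) = ∑' j : ℕ, ENNReal.ofReal (c * ((j:ℝ) + 3) ^ (-β)) := hsum.symm
    _ ≤ ∑' j : ℕ, ∫⁻ θ in J j, F θ :=
        ENNReal.tsum_le_tsum (fun j => le_trans (hterm j) (hblock j))
    _ = ∫⁻ θ in ⋃ j, J j, F θ := (lintegral_iUnion hJm hdisj F).symm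
    _ ≤ ∫⁻ θ in Set.Ioc 0 (2 * Real.pi), F θ := by
        apply lintegral_mono_set
        intro x hx
        obtain ⟨j, hj⟩ := Set.mem_iUnion.mp hx
        have := hJsub j hj
        exact ⟨this.1, this.2.le⟩

end Stmt13

/-- For `β ∈ (0,1]`, the set `E_β` is a closed countable subset
of `T` of logarithmic capacity zero which is not a Carleson set:
`∫_T log(1/d(ζ,E_β)) |dζ| = ∞`. -/
theorem statement13 (β : ℝ) (hβ : β ∈ Set.Ioc (0 : ℝ) 1) :
    Ebeta β ⊆ unitCircle ∧ IsClosed (Ebeta β) ∧ (Ebeta β).Countable ∧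
    capZero (Ebeta β) ∧
    (∫⁻ ζ, ENNReal.ofReal (Real.log (1 / Metric.infDist ζ (Ebeta β))) ∂muT) = ⊤ := by
  obtain ⟨hβ0, hβ1⟩ := hβ
  refine ⟨?_, Stmt13.Ebeta_closed hβ0, Stmt13.Ebeta_countable,
    Stmt13.capZero_of_countable Stmt13.Ebeta_countable, ?_⟩
  · rintro z (⟨n, hn, rfl⟩ | hz)
    · exact Stmt13.circle_mem _
    · rw [Set.mem_singleton_iff] at hz
      subst hz
      simp [unitCircle, mem_sphere_zero_iff_norm]
  · have hg : Measurable (fun θ : ℝ => Complex.exp (Complex.I * θ)) :=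
      (Complex.continuous_exp.comp (continuous_const.mul Complex.continuous_ofReal)).measurable
    have hf : Measurable
        (fun ζ : ℂ => ENNReal.ofReal (Real.log (1 / Metric.infDist ζ (Ebeta β)))) := by
      apply ENNReal.measurable_ofReal.comp
      apply Real.measurable_log.comp
      exact measurable_const.div (Metric.continuous_infDist_pt _).measurable
    unfold muT
    rw [lintegral_map hf hg]
    exact Stmt13.lint_top hβ0 hβ1
end
end

section
/- For every Borel probability measure μ on the unit circle T, the energy satisfies I(μ) := ∬_{T²} log(1/|ζ - ζ'|) dμ(ζ) dμ(ζ') = Σ_{n=1}^∞ |μ̂(n)|²/n, where μ̂(n) := ∫_T ζ^{-n} dμ(ζ); in particular both sides are equal whenever either is finite, and they are simultaneously infinite. -/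
noncomputable section

open MeasureTheory Set Metric Complex
open scoped Classical ENNReal Real

/-- The `n`-th Fourier coefficient `μ̂(n) = ∫_T ζ^{-n} dμ(ζ)` of a measure. -/
def mfc (μ : Measure ℂ) (n : ℤ) : ℂ := ∫ z, z ^ (-n) ∂μ

/-- The kernel `log(1/|z-w|) + log 2` (which is nonnegative for `|z-w| ≤ 2`),
with value `∞` on the diagonal. -/
def logKer2 (z w : ℂ) : ℝ≥0∞ :=
  if z = w then ⊤ else ENNReal.ofReal (Real.log (1 / ‖z - w‖) + Real.log 2)

open Filter ComplexConjugate

lemma aux_hasSum_log {x : ℂ} (hx : ‖x‖ < 1) :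
    HasSum (fun n : ℕ => ((x ^ (n+1)) / (n+1) : ℂ).re) (Real.log (1 / ‖1 - x‖)) := by
  have h := (hasSum_taylorSeries_neg_log hx).mapL Complex.reCLM
  have h2 : HasSum (fun n : ℕ => ((x ^ (n+1)) / ((n:ℂ)+1) : ℂ).re) ((-Complex.log (1-x)).re) := by
    have := (hasSum_nat_add_iff' 1).mpr h
    simpa using this
  have h3 : (-Complex.log (1-x)).re = Real.log (1 / ‖1 - x‖) := by
    rw [Complex.neg_re, Complex.log_re, one_div, Real.log_inv]
  rw [← h3]
  convert h2 using 2 with n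

lemma aux_mul_conj {w : ℂ} (hw : ‖w‖ = 1) : w * conj w = 1 := by
  rw [Complex.mul_conj]
  norm_cast
  rw [Complex.normSq_eq_norm_sq, hw]; norm_num

lemma aux_conj_pow {w : ℂ} (hw : ‖w‖ = 1) (m : ℕ) :
    (conj w) ^ m = w ^ (-(m:ℤ)) := by
  have h2 : conj w = w⁻¹ :=
    eq_inv_of_mul_eq_one_left (by rw [mul_comm]; exact aux_mul_conj hw)
  rw [h2, zpow_neg, zpow_natCast, inv_pow]

lemma aux_norm_eq {z w : ℂ} (hz : ‖z‖ = 1) (hw : ‖w‖ = 1) :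
    ‖z - w‖ = ‖1 - z * conj w‖ := by
  calc ‖z - w‖ = ‖(1 - z * conj w) * w‖ := by
        rw [sub_mul, one_mul, mul_assoc, mul_comm (conj w) w, aux_mul_conj hw, mul_one,
          norm_sub_rev]
    _ = ‖1 - z * conj w‖ := by rw [norm_mul, hw, mul_one]

lemma aux_sqrt_ineq {u : ℂ} (hu : ‖u‖ = 1) {r : ℝ} (hr0 : 0 ≤ r) (hr1 : r ≤ 1) :
    Real.sqrt r * ‖1 - u‖ ≤ ‖1 - (r:ℂ) * u‖ := by
  have hnsq : u.re ^ 2 + u.im ^ 2 = 1 := by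
    have h := Complex.sq_norm u
    rw [hu, Complex.normSq_apply] at h
    nlinarith [h]
  have e1 : ‖1 - (r:ℂ) * u‖ ^ 2 = (1 - r * u.re)^2 + (r * u.im)^2 := by
    rw [Complex.sq_norm, Complex.normSq_apply]
    simp [Complex.sub_re, Complex.sub_im, Complex.mul_re, Complex.mul_im]
    ring
  have e2 : ‖1 - u‖ ^ 2 = (1 - u.re)^2 + u.im^2 := by
    rw [Complex.sq_norm, Complex.normSq_apply]
    simp [Complex.sub_re, Complex.sub_im]
    ring
  have hs : (Real.sqrt r * ‖1 - u‖)^2 ≤ ‖1 - (r:ℂ) * u‖^2 := by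
    rw [mul_pow, Real.sq_sqrt hr0, e1, e2]
    nlinarith [sq_nonneg (1 - r)]
  have := Real.sqrt_le_sqrt hs
  rwa [Real.sqrt_sq (by positivity), Real.sqrt_sq (norm_nonneg _)] at this


lemma aux_mem_circle {z : ℂ} (hz : z ∈ unitCircle) : ‖z‖ = 1 := by
  simpa [unitCircle] using mem_sphere_zero_iff_norm.mp hz

-- norm of the "rotation" factor
lemma aux_norm_x {r : ℝ} (hr0 : 0 ≤ r) {z w : ℂ} (hz : ‖z‖ = 1) (hw : ‖w‖ = 1) :
    ‖(r:ℂ) * z * conj w‖ = r := by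
  simp [norm_mul, hz, hw, Complex.norm_real, _root_.abs_of_nonneg hr0]

-- bounds for ‖1 - r z conj w‖ on the circle
lemma aux_norm_bounds {r : ℝ} (hr0 : 0 ≤ r) (hr1 : r ≤ 1) {z w : ℂ} (hz : ‖z‖ = 1)
    (hw : ‖w‖ = 1) : 1 - r ≤ ‖1 - (r:ℂ) * z * conj w‖ ∧ ‖1 - (r:ℂ) * z * conj w‖ ≤ 2 := by
  have hx := aux_norm_x hr0 hz hw
  constructor
  · have := norm_sub_norm_le (1 : ℂ) ((r:ℂ) * z * conj w)
    rw [hx, norm_one] at this; linarith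
  · have := norm_sub_le (1 : ℂ) ((r:ℂ) * z * conj w)
    simp only [norm_one, hx] at this
    linarith

lemma aux_mfc_le (μ : Measure ℂ) [IsProbabilityMeasure μ] (hsupp : μ unitCircleᶜ = 0)
    (m : ℤ) : ‖mfc μ m‖ ≤ 1 := by
  have hae : ∀ᵐ z ∂μ, z ∈ unitCircle := by
    rw [MeasureTheory.ae_iff]; exact hsupp
  have h := norm_integral_le_of_norm_le_const (μ := μ) (f := fun z : ℂ => z ^ (-m)) (C := 1) ?_
  · simpa [mfc] using h
  · filter_upwards [hae] with z hz
    rw [norm_zpow, aux_mem_circle hz]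
    simp

lemma measKr (r : ℝ) :
    Measurable (fun p : ℂ × ℂ => Real.log 2 + Real.log (1 / ‖1 - (r:ℂ) * p.1 * conj p.2‖)) := by
  apply Measurable.add measurable_const
  apply Real.measurable_log.comp
  simp_rw [one_div]
  exact ((continuous_const.sub (((continuous_const.mul continuous_fst)).mul
    (continuous_star.comp continuous_snd))).norm.measurable).inv

lemma claim1 (μ : Measure ℂ) [IsProbabilityMeasure μ] (hsupp : μ unitCircleᶜ = 0)
    {r : ℝ} (hr0 : 0 < r) (hr1 : r < 1) :
    ∫⁻ p, ENNReal.ofReal (Real.log 2 + Real.log (1 / ‖1 - (r:ℂ) * p.1 * conj p.2‖)) ∂(μ.prod μ)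
      = (∑' n : ℕ, ENNReal.ofReal (r^(n+1) * (‖mfc μ ((n:ℤ)+1)‖^2 / ((n:ℝ)+1))))
        + ENNReal.ofReal (Real.log 2) := by
  set ν := μ.prod μ with hν
  haveI : IsProbabilityMeasure ν := by rw [hν]; infer_instance
  have hae : ∀ᵐ z ∂μ, z ∈ unitCircle := by rw [MeasureTheory.ae_iff]; exact hsupp
  have haep : ∀ᵐ p ∂ν, p.1 ∈ unitCircle ∧ p.2 ∈ unitCircle := by
    have h1 : ν ((unitCircle ×ˢ unitCircle)ᶜ) = 0 := by
      rw [Set.compl_prod_eq_union]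
      refine measure_union_null ?_ ?_ <;>
        · rw [hν, Measure.prod_prod]
          simp [hsupp]
    rw [MeasureTheory.ae_iff]
    refine measure_mono_null ?_ h1
    intro p hp
    simp only [Set.mem_setOf_eq, not_and_or] at hp
    simp only [Set.mem_compl_iff, Set.mem_prod, not_and_or]
    tauto
  set K : ℂ × ℂ → ℝ := fun p => Real.log 2 + Real.log (1 / ‖1 - (r:ℂ) * p.1 * conj p.2‖)
    with hK
  set L : ℂ × ℂ → ℝ := fun p => Real.log (1 / ‖1 - (r:ℂ) * p.1 * conj p.2‖) with hL
  -- positivity and bound of K on the circle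
  have hKbd : ∀ p : ℂ × ℂ, p.1 ∈ unitCircle → p.2 ∈ unitCircle →
      0 ≤ K p ∧ K p ≤ Real.log 2 + Real.log (1/(1-r)) := by
    intro p h1 h2
    obtain ⟨hlow, hup⟩ := aux_norm_bounds hr0.le hr1.le (aux_mem_circle h1) (aux_mem_circle h2)
    have hpos : (0:ℝ) < ‖1 - (r:ℂ) * p.1 * conj p.2‖ := by linarith
    constructor
    · have : Real.log ‖1 - (r:ℂ) * p.1 * conj p.2‖ ≤ Real.log 2 := Real.log_le_log hpos hup
      simp only [hK, one_div, Real.log_inv]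
      linarith
    · have : Real.log (1-r) ≤ Real.log ‖1 - (r:ℂ) * p.1 * conj p.2‖ :=
        Real.log_le_log (by linarith) hlow
      simp only [hK, one_div, Real.log_inv]
      linarith
  have hnn : 0 ≤ᵐ[ν] K := by
    filter_upwards [haep] with p hp
    exact (hKbd p hp.1 hp.2).1
  have hint : Integrable K ν := by
    refine Integrable.mono' (integrable_const (Real.log 2 + Real.log (1/(1-r))))
      (measKr r).aestronglyMeasurable ?_
    filter_upwards [haep] with p hp
    rw [Real.norm_eq_abs, _root_.abs_of_nonneg (hKbd p hp.1 hp.2).1]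
    exact (hKbd p hp.1 hp.2).2
  rw [← MeasureTheory.ofReal_integral_eq_lintegral_ofReal hint hnn]
  -- split the constant
  have hintL : Integrable L ν := by
    have := hint.sub (integrable_const (Real.log 2))
    refine this.congr (Filter.Eventually.of_forall fun p => ?_)
    simp [hK, hL]
  have hsplit : ∫ p, K p ∂ν = Real.log 2 + ∫ p, L p ∂ν := by
    have : ∫ p, K p ∂ν = ∫ p, (Real.log 2 + L p) ∂ν := rfl
    rw [this, integral_add (integrable_const _) hintL, integral_const]
    simp
  -- the term functions
  set T : ℕ → ℂ × ℂ → ℝ :=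
    fun n p => ((((r:ℂ) * p.1 * conj p.2) ^ (n+1)) / (n+1) : ℂ).re with hT
  have hc : Continuous fun p : ℂ × ℂ => (r:ℂ) * p.1 * conj p.2 :=
    (continuous_const.mul continuous_fst).mul (continuous_star.comp continuous_snd)
  have hLt : ∫ p, L p ∂ν = ∫ p, (∑' n, T n p) ∂ν := by
    refine integral_congr_ae ?_
    filter_upwards [haep] with p hp
    have hx : ‖(r:ℂ) * p.1 * conj p.2‖ < 1 := by
      rw [aux_norm_x hr0.le (aux_mem_circle hp.1) (aux_mem_circle hp.2)]; exact hr1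
    exact ((aux_hasSum_log hx).tsum_eq).symm
  have hsummable : Summable (fun n : ℕ => r^(n+1)/((n:ℝ)+1)) := by
    refine Summable.of_nonneg_of_le (fun n => by positivity) (fun n => ?_)
      (summable_geometric_of_lt_one hr0.le hr1)
    have h1 : r^(n+1) ≤ r^n := pow_le_pow_of_le_one hr0.le hr1.le (Nat.le_succ n)
    have h2 : r^(n+1)/((n:ℝ)+1) ≤ r^(n+1) := by
      apply div_le_self (by positivity)
      exact le_add_of_nonneg_left (Nat.cast_nonneg n)
    linarith
  have hTnorm : ∀ n : ℕ, ∀ p : ℂ × ℂ, p.1 ∈ unitCircle → p.2 ∈ unitCircle →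
      ‖T n p‖ ≤ r^(n+1)/((n:ℝ)+1) := by
    intro n p h1 h2
    have hx : ‖(r:ℂ) * p.1 * conj p.2‖ = r :=
      aux_norm_x hr0.le (aux_mem_circle h1) (aux_mem_circle h2)
    have hb : ‖T n p‖ ≤ ‖(((r:ℂ) * p.1 * conj p.2) ^ (n+1)) / ((n:ℂ)+1)‖ := by
      rw [hT]
      exact (Real.norm_eq_abs _).trans_le (Complex.abs_re_le_norm _)
    refine hb.trans_eq ?_
    rw [norm_div, norm_pow, hx]
    congr 1
    rw [show ((n:ℂ)+1) = ((n+1 : ℕ) : ℂ) by push_cast; ring]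
    rw [Complex.norm_natCast]
    push_cast; ring
  have hTmeas : ∀ n : ℕ, AEStronglyMeasurable (T n) ν := fun n =>
    (Complex.continuous_re.comp ((hc.pow (n+1)).div_const ((n:ℂ)+1))).aestronglyMeasurable
  have hTsumlint : ∑' n : ℕ, ∫⁻ p, (‖T n p‖₊ : ℝ≥0∞) ∂ν ≠ ⊤ := by
    have hb : ∀ n : ℕ, ∫⁻ p, (‖T n p‖₊ : ℝ≥0∞) ∂ν ≤ ENNReal.ofReal (r^(n+1)/((n:ℝ)+1)) := by
      intro n
      calc ∫⁻ p, (‖T n p‖₊ : ℝ≥0∞) ∂ν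
          ≤ ∫⁻ _, ENNReal.ofReal (r^(n+1)/((n:ℝ)+1)) ∂ν := by
            apply lintegral_mono_ae
            filter_upwards [haep] with p hp
            rw [← enorm_eq_nnnorm, ← ofReal_norm]
            exact ENNReal.ofReal_le_ofReal (hTnorm n p hp.1 hp.2)
        _ = ENNReal.ofReal (r^(n+1)/((n:ℝ)+1)) := by simp
    refine ne_top_of_le_ne_top ?_ (ENNReal.tsum_le_tsum hb)
    rw [← ENNReal.ofReal_tsum_of_nonneg (fun n => by positivity) hsummable]
    exact ENNReal.ofReal_ne_top
  have hswap : ∫ p, (∑' n, T n p) ∂ν = ∑' n, ∫ p, T n p ∂ν :=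
    integral_tsum hTmeas hTsumlint
  have hconj_int : ∀ n : ℕ, mfc μ ((n:ℤ)+1) = ∫ z, (conj z)^(n+1) ∂μ := by
    intro n
    rw [mfc]
    refine integral_congr_ae ?_
    filter_upwards [hae] with z hz
    rw [aux_conj_pow (aux_mem_circle hz) (n+1)]
    norm_cast
  have hTint : ∀ n : ℕ, ∫ p, T n p ∂ν = r^(n+1) * (‖mfc μ ((n:ℤ)+1)‖^2/((n:ℝ)+1)) := by
    intro n
    have hIntc : Integrable (fun p : ℂ × ℂ => (((r:ℂ) * p.1 * conj p.2) ^ (n+1)) / ((n:ℂ)+1)) ν := by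
      refine Integrable.mono' (integrable_const (r^(n+1)/((n:ℝ)+1)))
        ((hc.pow (n+1)).div_const ((n:ℂ)+1)).aestronglyMeasurable ?_
      filter_upwards [haep] with p hp
      rw [norm_div, norm_pow,
        aux_norm_x hr0.le (aux_mem_circle hp.1) (aux_mem_circle hp.2),
        show ((n:ℂ)+1) = ((n+1 : ℕ) : ℂ) by push_cast; ring, Complex.norm_natCast]
      push_cast
      exact le_rfl

    have h1 : ∫ p, T n p ∂ν
        = (∫ p, (((r:ℂ) * p.1 * conj p.2) ^ (n+1)) / ((n:ℂ)+1) ∂ν).re := by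
      rw [hT]
      have h := integral_re (𝕜 := ℂ) hIntc
      simpa [RCLike.re_eq_complex_re] using h
    have h2 : (fun p : ℂ × ℂ => (((r:ℂ) * p.1 * conj p.2) ^ (n+1)) / ((n:ℂ)+1))
        = fun p : ℂ × ℂ => ((r:ℂ)^(n+1)/((n:ℂ)+1)) •
            ((fun z : ℂ => z^(n+1)) p.1 * (fun w : ℂ => (conj w)^(n+1)) p.2) := by
      funext p
      simp only [smul_eq_mul]
      rw [mul_pow, mul_pow]
      ring
    rw [h1, h2, integral_smul, hν,
      integral_prod_mul (f := fun z : ℂ => z^(n+1)) (g := fun w : ℂ => (conj w)^(n+1))]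
    have hfz : ∫ z, z^(n+1) ∂μ = conj (mfc μ ((n:ℤ)+1)) := by
      rw [hconj_int n, ← integral_conj]
      simp
    rw [hfz, ← hconj_int n]
    set d := mfc μ ((n:ℤ)+1)
    have h3 : ((r:ℂ)^(n+1)/((n:ℂ)+1)) • (conj d * d)
        = (((r^(n+1) * (‖d‖^2/((n:ℝ)+1)) : ℝ)) : ℂ) := by
      rw [smul_eq_mul, mul_comm (conj d) d, Complex.mul_conj, Complex.normSq_eq_norm_sq]
      push_cast
      ring
    rw [h3, Complex.ofReal_re]
  have hsa : Summable (fun n : ℕ => r^(n+1) * (‖mfc μ ((n:ℤ)+1)‖^2/((n:ℝ)+1))) := by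
    refine Summable.of_nonneg_of_le (fun n => by positivity) (fun n => ?_) hsummable
    have hd := aux_mfc_le μ hsupp ((n:ℤ)+1)
    have hd2 : ‖mfc μ ((n:ℤ)+1)‖^2 ≤ 1 := by nlinarith [norm_nonneg (mfc μ ((n:ℤ)+1))]
    have hp1 : (0:ℝ) < (n:ℝ)+1 := by positivity
    rw [div_eq_mul_inv, div_eq_mul_inv]
    have : ‖mfc μ ((n:ℤ)+1)‖^2 * ((n:ℝ)+1)⁻¹ ≤ 1 * ((n:ℝ)+1)⁻¹ := by
      apply mul_le_mul_of_nonneg_right hd2 (by positivity)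
    calc r^(n+1) * (‖mfc μ ((n:ℤ)+1)‖^2 * ((n:ℝ)+1)⁻¹) ≤ r^(n+1) * (1 * ((n:ℝ)+1)⁻¹) := by
          apply mul_le_mul_of_nonneg_left this (by positivity)
      _ = r^(n+1) * ((n:ℝ)+1)⁻¹ := by ring
  rw [hsplit, hLt, hswap]
  have htc : ∑' n : ℕ, ∫ p, T n p ∂ν
      = ∑' n : ℕ, r^(n+1) * (‖mfc μ ((n:ℤ)+1)‖^2/((n:ℝ)+1)) := by
    exact tsum_congr hTint
  rw [htc, ENNReal.ofReal_add (Real.log_nonneg one_le_two)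
    (tsum_nonneg fun n => by positivity), add_comm,
    ENNReal.ofReal_tsum_of_nonneg (fun n => by positivity) hsa]

lemma measlogKer2 : Measurable (fun p : ℂ × ℂ => logKer2 p.1 p.2) := by
  unfold logKer2
  refine Measurable.ite ?_ measurable_const ?_
  · exact (isClosed_eq continuous_fst continuous_snd).measurableSet
  · apply ENNReal.measurable_ofReal.comp
    apply Measurable.add _ measurable_const
    apply Real.measurable_log.comp
    simp_rw [one_div]
    exact ((continuous_fst.sub continuous_snd).norm.measurable).inv

/-- For every Borel probability measure `μ` on the unit circle,
`I(μ) = ∬ log(1/|ζ-ζ'|) dμ dμ = Σ_{n≥1} |μ̂(n)|²/n`; stated with `log 2` added to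
both sides so that each side is a well-defined element of `[0,∞]`, the equality
holding also when both sides are infinite. -/
theorem statement17 (μ : Measure ℂ) (hμ : IsProbabilityMeasure μ)
    (hsupp : μ unitCircleᶜ = 0) :
    (∫⁻ z, ∫⁻ w, logKer2 z w ∂μ ∂μ) =
      (∑' n : ℕ, ENNReal.ofReal (‖mfc μ ((n : ℤ) + 1)‖ ^ 2 / ((n : ℝ) + 1))) +
        ENNReal.ofReal (Real.log 2) := by
  haveI := hμ
  set ν := μ.prod μ with hν
  haveI : IsProbabilityMeasure ν := by rw [hν]; infer_instance
  have hae : ∀ᵐ z ∂μ, z ∈ unitCircle := by rw [MeasureTheory.ae_iff]; exact hsupp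
  have haep : ∀ᵐ p ∂ν, p.1 ∈ unitCircle ∧ p.2 ∈ unitCircle := by
    have h1 : ν ((unitCircle ×ˢ unitCircle)ᶜ) = 0 := by
      rw [Set.compl_prod_eq_union]
      refine measure_union_null ?_ ?_ <;>
        · rw [hν, Measure.prod_prod]
          simp [hsupp]
    rw [MeasureTheory.ae_iff]
    refine measure_mono_null ?_ h1
    intro p hp
    simp only [Set.mem_setOf_eq, not_and_or] at hp
    simp only [Set.mem_compl_iff, Set.mem_prod, not_and_or]
    tauto
  set aR : ℕ → ℝ := fun n => ‖mfc μ ((n : ℤ) + 1)‖ ^ 2 / ((n : ℝ) + 1) with haR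
  set S : ℝ≥0∞ := ∑' n : ℕ, ENNReal.ofReal (aR n) with hS
  set E : ℝ≥0∞ := ∫⁻ p, logKer2 p.1 p.2 ∂ν with hE
  have h0 : (∫⁻ z, ∫⁻ w, logKer2 z w ∂μ ∂μ) = E := by
    rw [hE, hν]
    exact lintegral_lintegral measlogKer2.aemeasurable
  -- the radii
  set rk : ℕ → ℝ := fun k => 1 - 1/((k:ℝ)+2) with hrk
  have hrk0 : ∀ k, 0 < rk k := by
    intro k
    have h2 : (0:ℝ) < (k:ℝ)+2 := by positivity
    have h3 : 1/((k:ℝ)+2) < 1 := by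
      rw [div_lt_one h2]; linarith
    simp only [hrk]; linarith
  have hrk1 : ∀ k, rk k < 1 := by
    intro k
    have h2 : (0:ℝ) < 1/((k:ℝ)+2) := by positivity
    simp only [hrk]; linarith
  have h1k : Tendsto (fun k : ℕ => 1/((k:ℝ)+2)) Filter.atTop (nhds 0) := by
    simp_rw [one_div]
    apply Filter.Tendsto.inv_tendsto_atTop
    exact Filter.tendsto_atTop_add_const_right _ 2 tendsto_natCast_atTop_atTop
  have hrk_t : Tendsto rk Filter.atTop (nhds 1) := by
    have h := Filter.Tendsto.sub
      (tendsto_const_nhds : Tendsto (fun _ : ℕ => (1:ℝ)) Filter.atTop (nhds 1)) h1k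
    rw [hrk]
    simpa using h
  -- the smoothed kernels
  set gK : ℕ → (ℂ × ℂ) → ℝ≥0∞ := fun k p =>
    ENNReal.ofReal (Real.log 2 + Real.log (1 / ‖1 - ((rk k : ℝ) : ℂ) * p.1 * conj p.2‖))
    with hgK
  have measgK : ∀ k, Measurable (gK k) := fun k =>
    ENNReal.measurable_ofReal.comp (measKr (rk k))
  have hclaim : ∀ k, ∫⁻ p, gK k p ∂ν
      = (∑' n : ℕ, ENNReal.ofReal ((rk k)^(n+1) * aR n)) + ENNReal.ofReal (Real.log 2) := by
    intro k
    exact claim1 μ hsupp (hrk0 k) (hrk1 k)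
  have hgle : ∀ k, ∫⁻ p, gK k p ∂ν ≤ S + ENNReal.ofReal (Real.log 2) := by
    intro k
    rw [hclaim k]
    refine add_le_add_left ?_ _
    refine ENNReal.tsum_le_tsum fun n => ENNReal.ofReal_le_ofReal ?_
    have h2 : (rk k)^(n+1) ≤ 1 := pow_le_one₀ (hrk0 k).le (hrk1 k).le
    have h3 : 0 ≤ aR n := by rw [haR]; positivity
    calc (rk k)^(n+1) * aR n ≤ 1 * aR n := mul_le_mul_of_nonneg_right h2 h3
      _ = aR n := one_mul _
  -- pointwise convergence of the kernels
  have hpt : ∀ᵐ p ∂ν, Tendsto (fun k => gK k p) Filter.atTop (nhds (logKer2 p.1 p.2)) := by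
    filter_upwards [haep] with p hp
    have hz := aux_mem_circle hp.1
    have hw := aux_mem_circle hp.2
    by_cases hzw : p.1 = p.2
    · have hone : p.1 * conj p.2 = 1 := by rw [hzw]; exact aux_mul_conj hw
      have heq : ∀ k, gK k p = ENNReal.ofReal (Real.log 2 + Real.log ((k:ℝ)+2)) := by
        intro k
        simp only [hgK]
        rw [mul_assoc, hone, mul_one]
        congr 2
        have : (1 : ℂ) - ((rk k : ℝ) : ℂ) = (((1 - rk k : ℝ)) : ℂ) := by push_cast; ring
        rw [this, Complex.norm_real, Real.norm_eq_abs]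
        have h4 : 1 - rk k = 1/((k:ℝ)+2) := by simp [hrk]
        rw [h4, abs_of_pos (by positivity), one_div_one_div]
      simp only [logKer2]; rw [if_pos hzw]
      simp_rw [heq]
      apply Filter.Tendsto.comp ENNReal.tendsto_ofReal_atTop
      apply Filter.tendsto_atTop_add_const_left _ (Real.log 2)
      apply Filter.Tendsto.comp Real.tendsto_log_atTop
      exact Filter.tendsto_atTop_add_const_right _ 2 tendsto_natCast_atTop_atTop
    · set u := p.1 * conj p.2 with hu
      have hu1 : ‖u‖ = 1 := by
        rw [hu, norm_mul, hz, RCLike.norm_conj, hw]; norm_num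
      have hune : ‖p.1 - p.2‖ = ‖1 - u‖ := aux_norm_eq hz hw
      have hpos : (0:ℝ) < ‖p.1 - p.2‖ := by
        rw [norm_pos_iff]; exact sub_ne_zero_of_ne hzw
    -- limit of norms
      have hcu : Tendsto (fun k => ‖(1:ℂ) - ((rk k : ℝ) : ℂ) * u‖) Filter.atTop
          (nhds ‖1 - u‖) := by
        have h1 : Tendsto (fun k => ((rk k : ℝ) : ℂ)) Filter.atTop (nhds 1) := by
          have := (Complex.continuous_ofReal.tendsto 1).comp hrk_t
          simpa [Function.comp_def] using this
        have h2 : Tendsto (fun k => (1:ℂ) - ((rk k : ℝ) : ℂ) * u) Filter.atTop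
            (nhds (1 - 1 * u)) := tendsto_const_nhds.sub (h1.mul tendsto_const_nhds)
        rw [one_mul] at h2
        exact h2.norm
      simp only [logKer2]; rw [if_neg hzw]
      apply ENNReal.tendsto_ofReal
      have h3 : Tendsto (fun k => Real.log ‖(1:ℂ) - ((rk k : ℝ) : ℂ) * u‖) Filter.atTop
          (nhds (Real.log ‖1 - u‖)) := by
        refine Filter.Tendsto.comp (Real.continuousAt_log ?_).tendsto hcu
        rw [← hune]; exact ne_of_gt hpos
      have h4 : Tendsto (fun k => Real.log 2 + Real.log (1 / ‖(1:ℂ) - ((rk k : ℝ) : ℂ) * u‖))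
          Filter.atTop (nhds (Real.log 2 + - Real.log ‖1 - u‖)) := by
        simp_rw [one_div, Real.log_inv]
        exact tendsto_const_nhds.add h3.neg
      have h5 : Real.log 2 + - Real.log ‖1 - u‖ = Real.log (1 / ‖p.1 - p.2‖) + Real.log 2 := by
        rw [one_div, Real.log_inv, hune]; ring
      rw [h5] at h4
      have hass : (fun k => Real.log 2 + Real.log (1 / ‖(1:ℂ) - ((rk k : ℝ) : ℂ) * u‖))
          = fun k => Real.log 2 + Real.log (1 / ‖1 - ((rk k : ℝ) : ℂ) * p.1 * conj p.2‖) := by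
        funext k
        rw [hu, ← mul_assoc]
      rw [hass] at h4
      exact h4
  -- direction 1 : E ≤ S + log 2
  have dir1 : E ≤ S + ENNReal.ofReal (Real.log 2) := by
    have hEliminf : E = ∫⁻ p, Filter.liminf (fun k => gK k p) Filter.atTop ∂ν := by
      refine lintegral_congr_ae ?_
      filter_upwards [hpt] with p hp
      exact (hp.liminf_eq).symm
    have h6 : E ≤ Filter.liminf (fun k => ∫⁻ p, gK k p ∂ν) Filter.atTop := by
      rw [hEliminf]
      exact lintegral_liminf_le measgK
    refine h6.trans ?_
    have h7 : Filter.liminf (fun k => ∫⁻ p, gK k p ∂ν) Filter.atTop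
        ≤ Filter.liminf (fun _ : ℕ => S + ENNReal.ofReal (Real.log 2)) Filter.atTop :=
      Filter.liminf_le_liminf (Filter.Eventually.of_forall hgle)
    rwa [Filter.liminf_const] at h7
  -- claim 3 : comparison with the true kernel
  have claim3 : ∀ k, ∫⁻ p, gK k p ∂ν
      ≤ E + ENNReal.ofReal (Real.log (1 / Real.sqrt (rk k))) := by
    intro k
    have hmono : ∫⁻ p, gK k p ∂ν ≤ ∫⁻ p,
        (logKer2 p.1 p.2 + ENNReal.ofReal (Real.log (1 / Real.sqrt (rk k)))) ∂ν := by
      apply lintegral_mono_ae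
      filter_upwards [haep] with p hp
      have hz := aux_mem_circle hp.1
      have hw := aux_mem_circle hp.2
      by_cases hzw : p.1 = p.2
      · simp only [logKer2]; rw [if_pos hzw]; simp
      · simp only [logKer2]; rw [if_neg hzw]
        set u := p.1 * conj p.2 with hu
        have hu1 : ‖u‖ = 1 := by
          rw [hu, norm_mul, hz, RCLike.norm_conj, hw]; norm_num
        have hune : ‖p.1 - p.2‖ = ‖1 - u‖ := aux_norm_eq hz hw
        have hpos : (0:ℝ) < ‖p.1 - p.2‖ := by
          rw [norm_pos_iff]; exact sub_ne_zero_of_ne hzw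
        have hsq : Real.sqrt (rk k) * ‖1 - u‖ ≤ ‖1 - ((rk k : ℝ) : ℂ) * u‖ :=
          aux_sqrt_ineq hu1 (hrk0 k).le (hrk1 k).le
        have hsqpos : (0:ℝ) < Real.sqrt (rk k) := Real.sqrt_pos.mpr (hrk0 k)
        have hprodpos : (0:ℝ) < Real.sqrt (rk k) * ‖1 - u‖ := by
          apply mul_pos hsqpos; rw [← hune]; exact hpos
        have key : Real.log 2 + Real.log (1 / ‖1 - ((rk k : ℝ) : ℂ) * u‖)
            ≤ (Real.log (1 / ‖p.1 - p.2‖) + Real.log 2) + Real.log (1 / Real.sqrt (rk k)) := by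
          have h8 : Real.log (Real.sqrt (rk k) * ‖1 - u‖)
              ≤ Real.log ‖1 - ((rk k : ℝ) : ℂ) * u‖ := Real.log_le_log hprodpos hsq
          rw [Real.log_mul (ne_of_gt hsqpos) (by rw [← hune]; exact ne_of_gt hpos)] at h8
          simp only [one_div, Real.log_inv]
          rw [hune]
          linarith
        calc gK k p ≤ ENNReal.ofReal ((Real.log (1 / ‖p.1 - p.2‖) + Real.log 2)
              + Real.log (1 / Real.sqrt (rk k))) := by
              simp only [hgK]
              apply ENNReal.ofReal_le_ofReal
              rw [hu, ← mul_assoc] at key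
              exact key
          _ ≤ ENNReal.ofReal (Real.log (1 / ‖p.1 - p.2‖) + Real.log 2)
              + ENNReal.ofReal (Real.log (1 / Real.sqrt (rk k))) := ENNReal.ofReal_add_le
    refine hmono.trans_eq ?_
    rw [lintegral_add_right _ measurable_const, lintegral_const]
    simp [hE]
  -- the error term tends to zero
  have hεk : Tendsto (fun k => ENNReal.ofReal (Real.log (1 / Real.sqrt (rk k))))
      Filter.atTop (nhds 0) := by
    have h9 : Tendsto (fun k => Real.sqrt (rk k)) Filter.atTop (nhds 1) := by
      have := (Real.continuous_sqrt.tendsto 1).comp hrk_t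
      simpa [Function.comp_def] using this
    have h10 : Tendsto (fun k => Real.log (1 / Real.sqrt (rk k))) Filter.atTop (nhds 0) := by
      have h11 : Tendsto (fun k => (1:ℝ) / Real.sqrt (rk k)) Filter.atTop (nhds 1) := by
        simp_rw [one_div]
        have := h9.inv₀ one_ne_zero
        simpa using this
      have h13 := Filter.Tendsto.comp (Real.continuousAt_log one_ne_zero).tendsto h11
      simp only [Function.comp_def, Real.log_one] at h13
      exact h13
    have h12 := ENNReal.tendsto_ofReal h10
    simpa using h12
  -- direction 2 : S + log 2 ≤ E
  have dir2 : S + ENNReal.ofReal (Real.log 2) ≤ E := by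
    by_cases hEtop : E = ⊤
    · rw [hEtop]; exact le_top
    rw [hS, ENNReal.tsum_eq_iSup_sum, ENNReal.iSup_add]
    refine iSup_le fun F => ?_
    have t1 : Tendsto (fun k => (∑ n ∈ F, ENNReal.ofReal ((rk k)^(n+1) * aR n))
        + ENNReal.ofReal (Real.log 2)) Filter.atTop
        (nhds ((∑ n ∈ F, ENNReal.ofReal (aR n)) + ENNReal.ofReal (Real.log 2))) := by
      refine Filter.Tendsto.add ?_ tendsto_const_nhds
      refine tendsto_finset_sum F fun n _ => ?_
      apply ENNReal.tendsto_ofReal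
      have h12 : Tendsto (fun k => (rk k)^(n+1) * aR n) Filter.atTop
          (nhds (1^(n+1) * aR n)) := (hrk_t.pow (n+1)).mul_const _
      simpa using h12
    have t2 : Tendsto (fun k => E + ENNReal.ofReal (Real.log (1 / Real.sqrt (rk k))))
        Filter.atTop (nhds (E + 0)) := tendsto_const_nhds.add hεk
    have hle : ∀ k, (∑ n ∈ F, ENNReal.ofReal ((rk k)^(n+1) * aR n))
        + ENNReal.ofReal (Real.log 2)
        ≤ E + ENNReal.ofReal (Real.log (1 / Real.sqrt (rk k))) := by
      intro k
      refine le_trans (add_le_add_left (ENNReal.sum_le_tsum F) _) ?_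
      exact le_trans (le_of_eq (hclaim k).symm) (claim3 k)
    have := le_of_tendsto_of_tendsto' t1 t2 hle
    simpa using this
  rw [h0]
  exact le_antisymm dir1 dir2
end
end
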